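/- arXiv:0901.3577 — 6 statements merged into one kernel-verified Lean document; each statement's English description precedes it below -/
import Mathlib

section
/- Suppose Assumptions 1 and 2 hold for the system ẋ = f(x,λ,t), λ̇ = g(x,λ,t). Suppose there exist a function ψ of class K that is continuously differentiable and a constant a > 0 such that ψ'(V)·[α(V) + β(V)·φ(ψ(V))] + δ(α̲⁻¹(V)) + ξ(ψ(V)) ≤ 0 for all V ∈ [0,a], where α̲⁻¹ denotes the inverse of α̲. Then the set Ω_a = {(x,λ) ∈ ℝⁿ×ℝ : 0 ≤ V(x) ≤ a and ψ(V(x)) ≤ λ ≤ ψ(a)} is forward invariant: every solution (x(·),λ(·)) of the system with (x(t₀),λ(t₀)) ∈ Ω_a satisfies (x(t),λ(t)) ∈ Ω_a for all t ≥ t₀ in its interval of existence; in particular ‖x(t)‖ ≤ α̲⁻¹(a) and 0 ≤ λ(t) ≤ ψ(a) for all such t. -/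
/-!
While `ψ (V x) ≤ λ` holds, `λ ≥ 0`, so `λ̇ = g ≤ 0` and `λ` stays below `λ(t₀) ≤ ψ a`; then
`ψ (V x) ≤ ψ a` gives `V x ≤ a`. So it suffices to propagate the barrier `ψ (V x) ≤ λ`, which is
done by real induction. Where the solution touches the surface `λ = ψ (V x)`, the function
`w = ψ (V x) - λ` satisfies `ẇ ≤ C |w|` nearby: on the surface the hypothesis on `ψ` together
with Assumptions 1 and 2 gives `ẇ ≤ 0`, and the local Lipschitz bounds on `f` and `g` control the
error off the surface; a Gronwall-type comparison keeps `w ≤ 0`. This needs `V x ≤ a` near the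
touching time, which at the corner `V x = a`, `λ = ψ a` holds because there
`V̇ ≤ α a + β a φ (ψ a) < 0`, by the hypothesis on `ψ` at `a` and `δ (α̲⁻¹ a) > 0`.
-/

open Set Filter Topology

noncomputable section

/-- A function of class K: continuous on `[0,∞)`, strictly increasing there, vanishing at `0`. -/
def ClassK (κ : ℝ → ℝ) : Prop :=
  ContinuousOn κ (Set.Ici 0) ∧ StrictMonoOn κ (Set.Ici 0) ∧ κ 0 = 0

/-- A function of class K∞. -/
def ClassKInf (κ : ℝ → ℝ) : Prop :=
  ClassK κ ∧ Filter.Tendsto κ Filter.atTop Filter.atTop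

namespace ClassK

variable {κ : ℝ → ℝ}

theorem nonneg (hκ : ClassK κ) {s : ℝ} (hs : 0 ≤ s) : 0 ≤ κ s := by
  simpa [hκ.2.2] using hκ.2.1.monotoneOn self_mem_Ici hs hs

theorem pos (hκ : ClassK κ) {s : ℝ} (hs : 0 < s) : 0 < κ s := by
  simpa [hκ.2.2] using hκ.2.1 self_mem_Ici hs.le hs

theorem deriv_nonneg (hκ : ClassK κ) {s : ℝ} (hd : DifferentiableAt ℝ κ s) (hs : 0 ≤ s) :
    0 ≤ deriv κ s :=
  hd.derivWithin (uniqueDiffOn_Ici 0 s hs) ▸ hκ.2.1.monotoneOn.derivWithin_nonneg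

end ClassK

namespace ClassKInf

variable {κ κinv : ℝ → ℝ}

theorem exists_apply_eq (hκ : ClassKInf κ) {c : ℝ} (hc : 0 ≤ c) : ∃ s, 0 ≤ s ∧ κ s = c := by
  obtain ⟨M, hMc, hM⟩ := ((hκ.2.eventually_ge_atTop c).and (eventually_ge_atTop 0)).exists
  obtain ⟨s, hs, hsc⟩ := intermediate_value_Icc hM (hκ.1.1.mono Icc_subset_Ici_self)
    ⟨by rwa [hκ.1.2.2], hMc⟩
  exact ⟨s, hs.1, hsc⟩

theorem le_inv (hκ : ClassKInf κ) (hinv : ∀ s ∈ Ici (0:ℝ), κinv (κ s) = s) {s c : ℝ}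
    (hs : 0 ≤ s) (hc : 0 ≤ c) (h : κ s ≤ c) : s ≤ κinv c := by
  obtain ⟨r, hr, rfl⟩ := hκ.exists_apply_eq hc
  rw [hinv r hr]
  exact (hκ.1.2.1.le_iff_le hs hr).1 h

theorem inv_pos (hκ : ClassKInf κ) (hinv : ∀ s ∈ Ici (0:ℝ), κinv (κ s) = s) {c : ℝ}
    (hc : 0 < c) : 0 < κinv c := by
  obtain ⟨r, hr, rfl⟩ := hκ.exists_apply_eq hc.le
  rw [hinv r hr]
  exact hr.lt_of_ne (by rintro rfl; simp [hκ.1.2.2] at hc)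

end ClassKInf

theorem nonpos_of_hasDerivAt_le_mul_abs {w w' : ℝ → ℝ} {C s e : ℝ}
    (hw : ∀ u ∈ Icc s e, HasDerivAt w (w' u) u) (hs : w s ≤ 0)
    (hbound : ∀ u ∈ Ico s e, w' u ≤ C * |w u|) : ∀ u ∈ Icc s e, w u ≤ 0 := by
  set K := |C| + 1
  have fence : ∀ ε > 0, ∀ u ∈ Icc s e, w u ≤ ε * Real.exp (K * (u - s)) := by
    intro ε hε
    refine image_le_of_deriv_right_lt_deriv_boundary
      (B' := fun u => ε * (Real.exp (K * (u - s)) * (K * 1)))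
      (fun u hu => (hw u hu).continuousAt.continuousWithinAt)
      (fun u hu => (hw u (Ico_subset_Icc_self hu)).hasDerivWithinAt)
      (by simpa using hs.trans hε.le)
      (fun u => ((((hasDerivAt_id u).sub_const s).const_mul K).exp).const_mul ε)
      fun u hu hwu => ?_
    have hB : 0 < ε * Real.exp (K * (u - s)) := by positivity
    calc w' u ≤ C * |w u| := hbound u hu
      _ ≤ |C| * (ε * Real.exp (K * (u - s))) := by
        rw [hwu, abs_of_pos hB]
        exact mul_le_mul_of_nonneg_right (le_abs_self C) hB.le
      _ < ε * (Real.exp (K * (u - s)) * (K * 1)) := by nlinarith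
  intro u hu
  refine le_of_forall_pos_le_add fun ε hε => ?_
  simpa [div_mul_cancel₀ _ (Real.exp_pos _).ne'] using
    fence (ε / Real.exp (K * (u - s))) (by positivity) u hu

theorem eventually_nhdsGT_nonpos_of_hasDerivAt_le_mul_abs {w w' : ℝ → ℝ} {C m : ℝ}
    (hm : w m ≤ 0) (hw : ∀ᶠ u in 𝓝[≥] m, HasDerivAt w (w' u) u ∧ w' u ≤ C * |w u|) :
    ∀ᶠ u in 𝓝[>] m, w u ≤ 0 := by
  obtain ⟨e, hme, hsub⟩ := mem_nhdsGE_iff_exists_Ico_subset.1 hw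
  have hnonpos := nonpos_of_hasDerivAt_le_mul_abs (s := m) (e := (m + e) / 2)
    (fun u hu => (hsub ⟨hu.1, by linarith [hu.2, mem_Ioi.1 hme]⟩).1) hm
    (fun u hu => (hsub ⟨hu.1, by linarith [hu.2, mem_Ioi.1 hme]⟩).2)
  filter_upwards [Ioo_mem_nhdsGT (by linarith [mem_Ioi.1 hme] : m < (m + e) / 2)] with u hu
  exact hnonpos u (Ioo_subset_Icc_self hu)

theorem eventually_nhdsGE_le_of_hasDerivAt {h : ℝ → ℝ} {h' m c : ℝ} (hd : HasDerivAt h h' m)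
    (hm : h m ≤ c) (hneg : h m = c → h' < 0) : ∀ᶠ u in 𝓝[≥] m, h u ≤ c := by
  rw [← Ioi_insert]
  refine mem_nhdsWithin_insert.2 ⟨hm, ?_⟩
  rcases hm.lt_or_eq with hlt | heq
  · exact ((hd.continuousAt.eventually (gt_mem_nhds hlt)).filter_mono nhdsWithin_le_nhds).mono
      fun _ => le_of_lt
  · filter_upwards [(hd.hasDerivWithinAt (s := Ioi m)).limsup_slope_le' (lt_irrefl m) (hneg heq),
      self_mem_nhdsWithin] with u hslope hu
    exact heq ▸ ((slope_neg_iff_of_le (le_of_lt hu)).1 hslope).le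

theorem le_on_Ico_of_forall_eventually_nhdsGT {α : Type*} [ConditionallyCompleteLinearOrder α]
    [TopologicalSpace α] [OrderTopology α] [DenselyOrdered α] {f g : α → ℝ} {a b : α}
    (hf : ContinuousOn f (Ico a b)) (hg : ContinuousOn g (Ico a b)) (ha : f a ≤ g a)
    (hstep : ∀ t ∈ Ico a b, (∀ u ∈ Icc a t, f u ≤ g u) → ∀ᶠ u in 𝓝[>] t, f u ≤ g u) :
    ∀ t ∈ Ico a b, f t ≤ g t := by
  intro t ht
  have hsub : Icc a t ⊆ Ico a b := Icc_subset_Ico_right ht.2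
  refine IsClosed.Icc_subset_of_forall_mem_nhdsGT_of_Icc_subset (s := {u | f u ≤ g u}) ?_ ha
    (fun u hu hIcc => hstep u ⟨hu.1, hu.2.trans ht.2⟩ hIcc) ⟨ht.1, le_rfl⟩
  rw [inter_comm]
  exact isClosed_Icc.isClosed_le (hf.mono hsub) (hg.mono hsub)

theorem exists_eventually_dist_le_of_locallyLipschitz {E F : Type*} [PseudoMetricSpace E]
    [PseudoMetricSpace F] {h : E → ℝ → ℝ → F}
    (hlip : ∀ p : E × ℝ, ∃ s ∈ 𝓝 p, ∃ L : NNReal,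
      ∀ t : ℝ, LipschitzOnWith L (fun q : E × ℝ => h q.1 q.2 t) s)
    {x : ℝ → E} {μ ν : ℝ → ℝ} {m : ℝ} (hx : ContinuousAt x m) (hμ : ContinuousAt μ m)
    (hν : ContinuousAt ν m) (hμν : μ m = ν m) :
    ∃ L : NNReal, ∀ᶠ u in 𝓝 m, dist (h (x u) (μ u) u) (h (x u) (ν u) u) ≤ L * |μ u - ν u| := by
  obtain ⟨s, hs, L, hL⟩ := hlip (x m, μ m)
  refine ⟨L, ?_⟩
  filter_upwards [(hx.prodMk hμ).eventually_mem hs,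
    (hx.prodMk hν).eventually_mem (by rwa [← hμν])] with u hμu hνu
  calc dist (h (x u) (μ u) u) (h (x u) (ν u) u) ≤ L * dist (x u, μ u) (x u, ν u) :=
        (hL u).dist_le_mul _ hμu _ hνu
    _ = L * |μ u - ν u| := by
        rw [Prod.dist_eq, dist_self, Real.dist_eq, max_eq_right (abs_nonneg _)]

section

variable {E : Type*} [NormedAddCommGroup E] [NormedSpace ℝ E]

theorem mul_apply_sub_le_of_dist_le {ℓ : E →L[ℝ] ℝ} {D K Lf Lg r b₁ b₂ : ℝ} {v₁ v₂ : E}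
    (hD : 0 ≤ D) (hK : D * ‖ℓ‖ ≤ K) (hv : dist v₁ v₂ ≤ Lf * r) (hb : dist b₁ b₂ ≤ Lg * r)
    (h₂ : D * ℓ v₂ ≤ b₂) : D * ℓ v₁ - b₁ ≤ (K * Lf + Lg) * r := by
  have hℓ : D * ℓ (v₁ - v₂) ≤ K * (Lf * r) :=
    calc D * ℓ (v₁ - v₂) ≤ D * ‖ℓ‖ * ‖v₁ - v₂‖ := by
          rw [mul_assoc]
          exact mul_le_mul_of_nonneg_left ((le_abs_self _).trans (ℓ.le_opNorm _)) hD
      _ ≤ K * (Lf * r) := by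
          rw [← dist_eq_norm]
          exact mul_le_mul hK hv dist_nonneg ((mul_nonneg hD (norm_nonneg ℓ)).trans hK)
  rw [map_sub] at hℓ
  linarith [(le_abs_self (b₂ - b₁)).trans_eq (abs_sub_comm b₂ b₁), Real.dist_eq b₁ b₂]

theorem eventually_nhdsGT_comp_le_of_eq {f : E → ℝ → ℝ → E} {g : E → ℝ → ℝ → ℝ}
    (hf_lip : ∀ p : E × ℝ, ∃ s ∈ 𝓝 p, ∃ L : NNReal,
      ∀ t : ℝ, LipschitzOnWith L (fun q : E × ℝ => f q.1 q.2 t) s)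
    (hg_lip : ∀ p : E × ℝ, ∃ s ∈ 𝓝 p, ∃ L : NNReal,
      ∀ t : ℝ, LipschitzOnWith L (fun q : E × ℝ => g q.1 q.2 t) s)
    {V : E → ℝ} {ψ : ℝ → ℝ} (hV : ContDiff ℝ 1 V) (hψ : ContDiff ℝ 1 ψ)
    {x : ℝ → E} {lam : ℝ → ℝ} {m : ℝ}
    (hsol : ∀ᶠ u in 𝓝[≥] m,
      HasDerivAt x (f (x u) (lam u) u) u ∧ HasDerivAt lam (g (x u) (lam u) u) u)
    (hsurface : ∀ᶠ u in 𝓝[≥] m, 0 ≤ deriv ψ (V (x u)) ∧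
      deriv ψ (V (x u)) * fderiv ℝ V (x u) (f (x u) (ψ (V (x u))) u) ≤ g (x u) (ψ (V (x u))) u)
    (hm : ψ (V (x m)) = lam m) :
    ∀ᶠ u in 𝓝[>] m, ψ (V (x u)) ≤ lam u := by
  obtain ⟨hxm, hlamm⟩ := hsol.self_of_nhdsWithin self_mem_Ici
  have hμ : ContinuousAt (fun u => ψ (V (x u))) m :=
    (hψ.continuous.comp hV.continuous).continuousAt.comp hxm.continuousAt
  obtain ⟨Lf, hLf⟩ := exists_eventually_dist_le_of_locallyLipschitz hf_lip hxm.continuousAt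
    hlamm.continuousAt hμ hm.symm
  obtain ⟨Lg, hLg⟩ := exists_eventually_dist_le_of_locallyLipschitz hg_lip hxm.continuousAt
    hlamm.continuousAt hμ hm.symm
  set D : ℝ → ℝ := fun u => deriv ψ (V (x u)) * ‖fderiv ℝ V (x u)‖
  have hD : ContinuousAt D m :=
    ((hψ.continuous_deriv le_rfl).comp hV.continuous).continuousAt.comp hxm.continuousAt |>.mul
      ((hV.continuous_fderiv one_ne_zero).continuousAt.comp hxm.continuousAt).norm
  have hK : ∀ᶠ u in 𝓝 m, D u < D m + 1 := hD.eventually (gt_mem_nhds (lt_add_one (D m)))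
  refine (eventually_nhdsGT_nonpos_of_hasDerivAt_le_mul_abs (w := fun u => ψ (V (x u)) - lam u)
    (w' := fun u => deriv ψ (V (x u)) * fderiv ℝ V (x u) (f (x u) (lam u) u) - g (x u) (lam u) u)
    (C := (D m + 1) * Lf + Lg) (by simp [hm]) ?_).mono fun u => sub_nonpos.1
  filter_upwards [hsol, hsurface, nhdsWithin_le_nhds hLf, nhdsWithin_le_nhds hLg,
    nhdsWithin_le_nhds hK] with u ⟨hxu, hlamu⟩ ⟨hψ'u, hsurf⟩ hLfu hLgu hKu
  refine ⟨((hψ.differentiable one_ne_zero _).hasDerivAt.comp u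
    ((hV.differentiable one_ne_zero _).hasFDerivAt.comp_hasDerivAt u hxu)).sub hlamu, ?_⟩
  rw [abs_sub_comm]
  exact mul_apply_sub_le_of_dist_le hψ'u hKu.le hLfu hLgu hsurf

end

section BoundednessLemma

variable {E : Type*} [NormedAddCommGroup E] {f : E → ℝ → ℝ → E} {g : E → ℝ → ℝ → ℝ} {V : E → ℝ}
  {αlow αhigh α β φ δ ξ αlowInv ψ : ℝ → ℝ} {a : ℝ}

theorem lyapunov_nonneg (hαlow : ClassK αlow) (hVbound : ∀ x, αlow ‖x‖ ≤ V x ∧ V x ≤ αhigh ‖x‖)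
    (y : E) : 0 ≤ V y :=
  (hαlow.nonneg (norm_nonneg y)).trans (hVbound y).1

theorem lam_le_initial_of_barrier_le (hαlow : ClassK αlow)
    (hVbound : ∀ x, αlow ‖x‖ ≤ V x ∧ V x ≤ αhigh ‖x‖)
    (hg_bound : ∀ (x : E) (t : ℝ), ∀ lam ≥ (0:ℝ), -ξ |lam| - δ ‖x‖ ≤ g x lam t ∧ g x lam t ≤ 0)
    (hψK : ClassK ψ) {x : ℝ → E} {lam : ℝ → ℝ} {t₀ t : ℝ} (ht : t₀ ≤ t)
    (hsol : ∀ u ∈ Icc t₀ t, HasDerivAt lam (g (x u) (lam u) u) u)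
    (hbar : ∀ u ∈ Icc t₀ t, ψ (V (x u)) ≤ lam u) : lam t ≤ lam t₀ :=
  antitoneOn_of_hasDerivWithinAt_nonpos (convex_Icc t₀ t)
    (fun u hu => (hsol u hu).continuousAt.continuousWithinAt)
    (fun u hu => (hsol u (interior_subset hu)).hasDerivWithinAt)
    (fun u hu => (hg_bound _ _ _ ((hψK.nonneg (lyapunov_nonneg hαlow hVbound _)).trans
      (hbar u (interior_subset hu)))).2)
    (left_mem_Icc.2 ht) (right_mem_Icc.2 ht) ht

variable [NormedSpace ℝ E]

theorem barrier_deriv_le_on_surface (hαlow : ClassKInf αlow)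
    (hVbound : ∀ x, αlow ‖x‖ ≤ V x ∧ V x ≤ αhigh ‖x‖)
    (hVdot : ∀ x lam t, fderiv ℝ V x (f x lam t) ≤ α (V x) + β (V x) * φ |lam|)
    (hδ : ClassK δ)
    (hg_bound : ∀ (x : E) (t : ℝ), ∀ lam ≥ (0:ℝ), -ξ |lam| - δ ‖x‖ ≤ g x lam t ∧ g x lam t ≤ 0)
    (hinv1 : ∀ s ∈ Set.Ici (0:ℝ), αlowInv (αlow s) = s)
    (hψK : ClassK ψ) (hψC1 : ContDiff ℝ 1 ψ)
    (hcond : ∀ v ∈ Set.Icc (0:ℝ) a,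
      deriv ψ v * (α v + β v * φ (ψ v)) + δ (αlowInv v) + ξ (ψ v) ≤ 0)
    {y : E} (t : ℝ) (hy : V y ≤ a) :
    deriv ψ (V y) * fderiv ℝ V y (f y (ψ (V y)) t) ≤ g y (ψ (V y)) t := by
  have hV : 0 ≤ V y := lyapunov_nonneg hαlow.1 hVbound y
  have hψ : 0 ≤ ψ (V y) := hψK.nonneg hV
  have hnorm : ‖y‖ ≤ αlowInv (V y) := hαlow.le_inv hinv1 (norm_nonneg y) hV (hVbound y).1
  have hδy : δ ‖y‖ ≤ δ (αlowInv (V y)) :=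
    hδ.2.1.monotoneOn (norm_nonneg y) ((norm_nonneg y).trans hnorm) hnorm
  have hVdot' := mul_le_mul_of_nonneg_left (hVdot y (ψ (V y)) t)
    (hψK.deriv_nonneg (hψC1.differentiable one_ne_zero _) hV)
  have hg := (hg_bound y t _ hψ).1
  rw [abs_of_nonneg hψ] at hVdot' hg
  linarith [hcond (V y) ⟨hV, hy⟩]

theorem add_mul_neg_of_cond (hαlow : ClassKInf αlow)
    (hinv1 : ∀ s ∈ Set.Ici (0:ℝ), αlowInv (αlow s) = s) (hδ : ClassK δ) (hξ : ClassK ξ)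
    (hψK : ClassK ψ) (hψC1 : ContDiff ℝ 1 ψ) (ha : 0 < a)
    (hcond : ∀ v ∈ Set.Icc (0:ℝ) a,
      deriv ψ v * (α v + β v * φ (ψ v)) + δ (αlowInv v) + ξ (ψ v) ≤ 0) :
    α a + β a * φ (ψ a) < 0 := by
  by_contra! hnonneg
  nlinarith [hcond a ⟨ha.le, le_rfl⟩, hδ.pos (hαlow.inv_pos hinv1 ha), hξ.nonneg (hψK.nonneg ha.le),
    mul_nonneg (hψK.deriv_nonneg (hψC1.differentiable one_ne_zero a) ha.le) hnonneg]

theorem eventually_nhdsGT_barrier_le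
    (hf_lip : ∀ p : E × ℝ, ∃ s ∈ 𝓝 p, ∃ L : NNReal,
      ∀ t : ℝ, LipschitzOnWith L (fun q : E × ℝ => f q.1 q.2 t) s)
    (hg_lip : ∀ p : E × ℝ, ∃ s ∈ 𝓝 p, ∃ L : NNReal,
      ∀ t : ℝ, LipschitzOnWith L (fun q : E × ℝ => g q.1 q.2 t) s)
    (hV : ContDiff ℝ 1 V) (hαlow : ClassKInf αlow)
    (hVbound : ∀ x, αlow ‖x‖ ≤ V x ∧ V x ≤ αhigh ‖x‖)
    (hVdot : ∀ x lam t, fderiv ℝ V x (f x lam t) ≤ α (V x) + β (V x) * φ |lam|)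
    (hδ : ClassK δ) (hξ : ClassK ξ)
    (hg_bound : ∀ (x : E) (t : ℝ), ∀ lam ≥ (0:ℝ), -ξ |lam| - δ ‖x‖ ≤ g x lam t ∧ g x lam t ≤ 0)
    (hinv1 : ∀ s ∈ Set.Ici (0:ℝ), αlowInv (αlow s) = s)
    (hψK : ClassK ψ) (hψC1 : ContDiff ℝ 1 ψ) (ha : 0 < a)
    (hcond : ∀ v ∈ Set.Icc (0:ℝ) a,
      deriv ψ v * (α v + β v * φ (ψ v)) + δ (αlowInv v) + ξ (ψ v) ≤ 0)
    {x : ℝ → E} {lam : ℝ → ℝ} {m : ℝ}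
    (hsol : ∀ᶠ u in 𝓝[≥] m,
      HasDerivAt x (f (x u) (lam u) u) u ∧ HasDerivAt lam (g (x u) (lam u) u) u)
    (hbar : ψ (V (x m)) ≤ lam m) (hlam : lam m ≤ ψ a) :
    ∀ᶠ u in 𝓝[>] m, ψ (V (x u)) ≤ lam u := by
  obtain ⟨hxm, hlamm⟩ := hsol.self_of_nhdsWithin self_mem_Ici
  have hVnn := lyapunov_nonneg hαlow.1 hVbound
  rcases hbar.lt_or_eq with hlt | heq
  · exact ((((hψC1.continuous.comp hV.continuous).continuousAt.comp hxm.continuousAt).eventually_lt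
      hlamm.continuousAt hlt).filter_mono nhdsWithin_le_nhds).mono fun _ => le_of_lt
  have hV_le : ∀ᶠ u in 𝓝[≥] m, V (x u) ≤ a := by
    refine eventually_nhdsGE_le_of_hasDerivAt
      ((hV.differentiable one_ne_zero _).hasFDerivAt.comp_hasDerivAt m hxm)
      ((hψK.2.1.le_iff_le (hVnn _) ha.le).1 (heq.trans_le hlam)) fun hVa => ?_
    calc fderiv ℝ V (x m) (f (x m) (lam m) m) ≤ α (V (x m)) + β (V (x m)) * φ |lam m| :=
          hVdot _ _ _
      _ = α a + β a * φ (ψ a) := by rw [← heq, hVa, abs_of_pos (hψK.pos ha)]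
      _ < 0 := add_mul_neg_of_cond hαlow hinv1 hδ hξ hψK hψC1 ha hcond
  refine eventually_nhdsGT_comp_le_of_eq hf_lip hg_lip hV hψC1 hsol ?_ heq
  filter_upwards [hV_le] with u hu
  exact ⟨hψK.deriv_nonneg (hψC1.differentiable one_ne_zero _) (hVnn _),
    barrier_deriv_le_on_surface hαlow hVbound hVdot hδ hg_bound hinv1 hψK hψC1 hcond u hu⟩

end BoundednessLemma

theorem boundedness_lemma_one_invariance_general
    {n : ℕ}
    (f : EuclideanSpace ℝ (Fin n) → ℝ → ℝ → EuclideanSpace ℝ (Fin n))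
    (g : EuclideanSpace ℝ (Fin n) → ℝ → ℝ → ℝ)
    (hf_lip : ∀ p : EuclideanSpace ℝ (Fin n) × ℝ, ∃ s ∈ nhds p, ∃ L : NNReal,
      ∀ t : ℝ, LipschitzOnWith L (fun q : EuclideanSpace ℝ (Fin n) × ℝ => f q.1 q.2 t) s)
    (hg_lip : ∀ p : EuclideanSpace ℝ (Fin n) × ℝ, ∃ s ∈ nhds p, ∃ L : NNReal,
      ∀ t : ℝ, LipschitzOnWith L (fun q : EuclideanSpace ℝ (Fin n) × ℝ => g q.1 q.2 t) s)
    -- Assumption 1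
    (V : EuclideanSpace ℝ (Fin n) → ℝ) (hV : ContDiff ℝ 1 V)
    (αlow αhigh : ℝ → ℝ) (hαlow : ClassKInf αlow)
    (α β : ℝ → ℝ)
    (φ : ℝ → ℝ)
    (hVbound : ∀ x, αlow ‖x‖ ≤ V x ∧ V x ≤ αhigh ‖x‖)
    (hVdot : ∀ x lam t, fderiv ℝ V x (f x lam t) ≤ α (V x) + β (V x) * φ |lam|)
    -- Assumption 2
    (δ ξ : ℝ → ℝ) (hδ : ClassK δ) (hξ : ClassK ξ)
    (hg_bound : ∀ (x : EuclideanSpace ℝ (Fin n)) (t : ℝ), ∀ lam ≥ (0:ℝ),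
      -ξ |lam| - δ ‖x‖ ≤ g x lam t ∧ g x lam t ≤ 0)
    -- the inverse of α̲ on `[0,∞)`
    (αlowInv : ℝ → ℝ)
    (hinv1 : ∀ s ∈ Set.Ici (0:ℝ), αlowInv (αlow s) = s)
    -- the function ψ and the constant a
    (ψ : ℝ → ℝ) (hψK : ClassK ψ) (hψC1 : ContDiff ℝ 1 ψ)
    (a : ℝ) (ha : 0 < a)
    (hcond : ∀ v ∈ Set.Icc (0:ℝ) a,
      deriv ψ v * (α v + β v * φ (ψ v)) + δ (αlowInv v) + ξ (ψ v) ≤ 0)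
    -- a solution on [t₀, T)
    (t₀ T : ℝ) (x : ℝ → EuclideanSpace ℝ (Fin n)) (lam : ℝ → ℝ)
    (hsol : ∀ t ∈ Set.Ico t₀ T,
      HasDerivAt x (f (x t) (lam t) t) t ∧ HasDerivAt lam (g (x t) (lam t) t) t)
    -- with initial condition in Ω_a
    (hinit : V (x t₀) ∈ Set.Icc (0:ℝ) a ∧ ψ (V (x t₀)) ≤ lam t₀ ∧ lam t₀ ≤ ψ a) :
    ∀ t ∈ Set.Ico t₀ T,
      (V (x t) ∈ Set.Icc (0:ℝ) a ∧ ψ (V (x t)) ≤ lam t ∧ lam t ≤ ψ a) ∧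
      ‖x t‖ ≤ αlowInv a ∧ 0 ≤ lam t ∧ lam t ≤ ψ a := by
  have hVnn := lyapunov_nonneg hαlow.1 hVbound
  have hlam : ∀ t ∈ Ico t₀ T, (∀ u ∈ Icc t₀ t, ψ (V (x u)) ≤ lam u) → lam t ≤ ψ a :=
    fun t ht hbar => (lam_le_initial_of_barrier_le hαlow.1 hVbound hg_bound hψK ht.1
      (fun u hu => (hsol u (Icc_subset_Ico_right ht.2 hu)).2) hbar).trans hinit.2.2
  have hbarrier : ∀ t ∈ Ico t₀ T, ψ (V (x t)) ≤ lam t := by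
    refine le_on_Ico_of_forall_eventually_nhdsGT
      (fun u hu => ((hψC1.continuous.comp hV.continuous).continuousAt.comp
        (hsol u hu).1.continuousAt).continuousWithinAt)
      (fun u hu => (hsol u hu).2.continuousAt.continuousWithinAt) hinit.2.1 fun m hm hbar => ?_
    refine eventually_nhdsGT_barrier_le hf_lip hg_lip hV hαlow hVbound hVdot hδ hξ hg_bound hinv1
      hψK hψC1 ha hcond ?_ (hbar m ⟨hm.1, le_rfl⟩) (hlam m hm hbar)
    filter_upwards [Ico_mem_nhdsGE hm.2] with u hu using hsol u ⟨hm.1.trans hu.1, hu.2⟩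
  intro t ht
  have hψt := hbarrier t ht
  have hlamt := hlam t ht fun u hu => hbarrier u (Icc_subset_Ico_right ht.2 hu)
  have hVt : V (x t) ≤ a := (hψK.2.1.le_iff_le (hVnn _) ha.le).1 (hψt.trans hlamt)
  exact ⟨⟨⟨hVnn _, hVt⟩, hψt, hlamt⟩,
    hαlow.le_inv hinv1 (norm_nonneg _) ha.le ((hVbound _).1.trans hVt),
    (hψK.nonneg (hVnn _)).trans hψt, hlamt⟩

/-- **Boundedness Lemma 1 (forward invariance part).**
Under Assumptions 1 and 2, if there are a `C¹` class-K function `ψ` and `a > 0` with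
`ψ'(V)[α(V)+β(V)φ(ψ(V))] + δ(α̲⁻¹(V)) + ξ(ψ(V)) ≤ 0` on `[0,a]`, then the set
`Ω_a = {(x,λ) : 0 ≤ V(x) ≤ a, ψ(V(x)) ≤ λ ≤ ψ(a)}` is forward invariant; in particular
`‖x(t)‖ ≤ α̲⁻¹(a)` and `0 ≤ λ(t) ≤ ψ(a)` along solutions starting in `Ω_a`. -/
theorem boundedness_lemma_one_invariance
    {n : ℕ}
    (f : EuclideanSpace ℝ (Fin n) → ℝ → ℝ → EuclideanSpace ℝ (Fin n))
    (g : EuclideanSpace ℝ (Fin n) → ℝ → ℝ → ℝ)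
    (hf_cont : Continuous fun q : EuclideanSpace ℝ (Fin n) × ℝ × ℝ => f q.1 q.2.1 q.2.2)
    (hg_cont : Continuous fun q : EuclideanSpace ℝ (Fin n) × ℝ × ℝ => g q.1 q.2.1 q.2.2)
    (hf_lip : ∀ p : EuclideanSpace ℝ (Fin n) × ℝ, ∃ s ∈ nhds p, ∃ L : NNReal,
      ∀ t : ℝ, LipschitzOnWith L (fun q : EuclideanSpace ℝ (Fin n) × ℝ => f q.1 q.2 t) s)
    (hg_lip : ∀ p : EuclideanSpace ℝ (Fin n) × ℝ, ∃ s ∈ nhds p, ∃ L : NNReal,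
      ∀ t : ℝ, LipschitzOnWith L (fun q : EuclideanSpace ℝ (Fin n) × ℝ => g q.1 q.2 t) s)
    -- Assumption 1
    (V : EuclideanSpace ℝ (Fin n) → ℝ) (hV : ContDiff ℝ 1 V)
    (αlow αhigh : ℝ → ℝ) (hαlow : ClassKInf αlow) (hαhigh : ClassKInf αhigh)
    (α β : ℝ → ℝ) (hα : Continuous α) (hβ : Continuous β)
    (φ : ℝ → ℝ) (hφ : ClassK φ)
    (hVbound : ∀ x, αlow ‖x‖ ≤ V x ∧ V x ≤ αhigh ‖x‖)
    (hVdot : ∀ x lam t, fderiv ℝ V x (f x lam t) ≤ α (V x) + β (V x) * φ |lam|)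
    -- Assumption 2
    (δ ξ : ℝ → ℝ) (hδ : ClassK δ) (hξ : ClassK ξ)
    (hg_bound : ∀ (x : EuclideanSpace ℝ (Fin n)) (t : ℝ), ∀ lam ≥ (0:ℝ),
      -ξ |lam| - δ ‖x‖ ≤ g x lam t ∧ g x lam t ≤ 0)
    -- the inverse of α̲ on `[0,∞)`
    (αlowInv : ℝ → ℝ)
    (hinv1 : ∀ s ∈ Set.Ici (0:ℝ), αlowInv (αlow s) = s)
    (hinv2 : ∀ s ∈ Set.Ici (0:ℝ), αlow (αlowInv s) = s)
    -- the function ψ and the constant a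
    (ψ : ℝ → ℝ) (hψK : ClassK ψ) (hψC1 : ContDiff ℝ 1 ψ)
    (a : ℝ) (ha : 0 < a)
    (hcond : ∀ v ∈ Set.Icc (0:ℝ) a,
      deriv ψ v * (α v + β v * φ (ψ v)) + δ (αlowInv v) + ξ (ψ v) ≤ 0)
    -- a solution on [t₀, T)
    (t₀ T : ℝ) (x : ℝ → EuclideanSpace ℝ (Fin n)) (lam : ℝ → ℝ)
    (hsol : ∀ t ∈ Set.Ico t₀ T,
      HasDerivAt x (f (x t) (lam t) t) t ∧ HasDerivAt lam (g (x t) (lam t) t) t)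
    -- with initial condition in Ω_a
    (hinit : V (x t₀) ∈ Set.Icc (0:ℝ) a ∧ ψ (V (x t₀)) ≤ lam t₀ ∧ lam t₀ ≤ ψ a) :
    ∀ t ∈ Set.Ico t₀ T,
      (V (x t) ∈ Set.Icc (0:ℝ) a ∧ ψ (V (x t)) ≤ lam t ∧ lam t ≤ ψ a) ∧
      ‖x t‖ ≤ αlowInv a ∧ 0 ≤ lam t ∧ lam t ≤ ψ a :=
  boundedness_lemma_one_invariance_general f g hf_lip hg_lip V hV αlow αhigh hαlow α β φ hVbound
    hVdot δ ξ hδ hξ hg_bound αlowInv hinv1 ψ hψK hψC1 a ha hcond t₀ T x lam hsol hinit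
end
end

section
/- Consider the system ẋ = f(x,λ,t), λ̇ = u, where u is a control input, and suppose f satisfies Assumption 1 with the function φ of class K being locally Lipschitz and with α(V) = −α₀(V) for some function α₀ of class P. Then there exist a continuous function g : ℝⁿ×ℝ×ℝ → ℝ, a function ψ of class K∞ and a constant a > 0 such that, for the closed-loop system ẋ = f(x,λ,t), λ̇ = g(x,λ,t), the set Ω_a = {(x,λ) : 0 ≤ V(x) ≤ a and ψ(V(x)) ≤ λ ≤ ψ(a)} is forward invariant, all solutions passing through Ω_a are bounded in forward time, and every such solution defined on [t₀,∞) satisfies λ(t) → λ' for some λ' ∈ [0,ψ(a)] and ‖x(t)‖ → 0 as t → ∞. -/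
open Set Filter Topology

noncomputable section

/-- A function of class P: continuous on `[0,∞)`, vanishing at `0`, positive on `(0,∞)`. -/
def ClassP (p : ℝ → ℝ) : Prop :=
  ContinuousOn p (Set.Ici 0) ∧ p 0 = 0 ∧ ∀ s > (0:ℝ), 0 < p s

/-!
The feedback is `g(x, λ, t) = -λ`, so `λ` decays exponentially and everything rests on choosing
`ψ` so that `λ ≥ ψ(V(x))` is a barrier inside `{V ≤ 1}`. On `[0, 1]` take `ψ = E · m`, where
`E = exp ∫₁ 4/α₀` and `m` is a continuous nondecreasing minorant of `min(r, α₀/(2(1 + L|β|)))`,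
`φ(z) ≤ L z` on `[0, r]`. The factor `m` gives `β(V) φ(λ) ≤ α₀(V)/2` whenever `0 ≤ λ ≤ ψ(V)`,
hence `V̇ ≤ -α₀(V)/2` there; so neither `V = 1` nor `λ = ψ(V)` can be crossed, because at a
crossing `V` decreases and `E(V)` decreases at rate at least `2`, while `λ` decreases at rate `1`.
Once in `Ω₁`, `λ → 0` forces `ψ(V(x)) → 0` and hence `x → 0`.
-/

lemma ClassK.nonneg_s4 {κ : ℝ → ℝ} (hκ : ClassK κ) {s : ℝ} (hs : 0 ≤ s) : 0 ≤ κ s :=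
  hκ.2.2 ▸ hκ.2.1.monotoneOn self_mem_Ici hs hs

lemma ClassK.pos_s4 {κ : ℝ → ℝ} (hκ : ClassK κ) {s : ℝ} (hs : 0 < s) : 0 < κ s :=
  hκ.2.2 ▸ hκ.2.1 self_mem_Ici hs.le hs

lemma ClassP.nonneg_s4 {p : ℝ → ℝ} (hp : ClassP p) {s : ℝ} (hs : 0 ≤ s) : 0 ≤ p s := by
  rcases hs.eq_or_lt with rfl | hs
  exacts [hp.2.1.ge, (hp.2.2 s hs).le]

lemma ClassK.tendsto_zero_of_tendsto_comp {ι : Type*} {l : Filter ι} {κ : ℝ → ℝ} (hκ : ClassK κ)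
    {u : ι → ℝ} (hu : ∀ i, 0 ≤ u i) (h : Tendsto (fun i => κ (u i)) l (𝓝 0)) :
    Tendsto u l (𝓝 0) := by
  refine tendsto_order.2 ⟨fun ε hε => .of_forall fun i => hε.trans_le (hu i), fun ε hε => ?_⟩
  filter_upwards [h.eventually (gt_mem_nhds (hκ.pos_s4 hε))] with i hi
  exact (hκ.2.1.lt_iff_lt (hu i) hε.le).1 hi

lemma HasDerivAt.eventually_nhdsGT_lt {f : ℝ → ℝ} {f' x : ℝ} (hf : HasDerivAt f f' x)
    (hf' : 0 < f') : ∀ᶠ y in 𝓝[>] x, f x < f y := by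
  have hslope := (hasDerivWithinAt_iff_tendsto_slope' (lt_irrefl x)).1 hf.hasDerivWithinAt
  filter_upwards [hslope.eventually (eventually_gt_nhds hf'), self_mem_nhdsWithin]
    with y hy hxy
  rw [slope_def_field, lt_div_iff₀ (sub_pos.2 hxy)] at hy
  linarith

lemma le_on_Icc_of_eventually_lt_of_eq {f g : ℝ → ℝ} {a b : ℝ} (hf : ContinuousOn f (Icc a b))
    (hg : ContinuousOn g (Icc a b)) (ha : f a ≤ g a)
    (hfg : ∀ x ∈ Ico a b, f x = g x → ∀ᶠ y in 𝓝[>] x, f y < g y) :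
    ∀ x ∈ Icc a b, f x ≤ g x := by
  have hclosed : IsClosed ({x | f x ≤ g x} ∩ Icc a b) := by
    convert (hg.sub hf).preimage_isClosed_of_isClosed isClosed_Icc (isClosed_Ici (a := 0)) using 1
    ext x
    simp [sub_nonneg, and_comm]
  refine fun x hx => (hclosed.Icc_subset_of_forall_mem_nhdsWithin ha fun y ⟨hy, hyI⟩ => ?_) hx
  rcases (show f y ≤ g y from hy).eq_or_lt with hfg' | hlt
  · exact (hfg y hyI hfg').mono fun z hz => hz.le
  · have hIcc : Icc a b ∈ 𝓝[>] y :=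
      mem_of_superset (Ioo_mem_nhdsGT hyI.2) fun z hz => ⟨hyI.1.trans hz.1.le, hz.2.le⟩
    exact nhdsWithin_le_of_mem hIcc
      (((hg.sub hf) y (Ico_subset_Icc_self hyI)).eventually (eventually_gt_nhds (sub_pos.2 hlt))
        |>.mono fun z hz => (sub_pos.1 hz).le)

lemma eq_mul_exp_of_hasDerivAt_neg {u : ℝ → ℝ} {a b : ℝ} (hab : a ≤ b)
    (hu : ∀ t ∈ Icc a b, HasDerivAt u (-u t) t) : u b = u a * Real.exp (a - b) := by
  have hconst := constant_of_has_deriv_right_zero (f := fun t => u t * Real.exp t)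
    (fun t ht => ((hu t ht).mul (Real.hasDerivAt_exp t)).continuousAt.continuousWithinAt)
    (fun t ht => by
      have h := ((hu t (Ico_subset_Icc_self ht)).mul (Real.hasDerivAt_exp t)).hasDerivWithinAt
        (s := Ici t)
      rwa [neg_mul, neg_add_cancel] at h)
    b (right_mem_Icc.2 hab)
  rw [Real.exp_sub, mul_div_assoc', eq_div_iff (Real.exp_pos b).ne', hconst]

lemma tendsto_zero_of_hasDerivAt_neg {u : ℝ → ℝ} {a : ℝ} (hu : ∀ t ≥ a, HasDerivAt u (-u t) t) :
    Tendsto u atTop (𝓝 0) := by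
  have hexp : Tendsto (fun t => u a * Real.exp (a - t)) atTop (𝓝 0) := by
    simpa [sub_eq_add_neg] using (Real.tendsto_exp_atBot.comp (tendsto_atBot_add_const_left _ a
      tendsto_neg_atTop_atBot)).const_mul (u a)
  refine hexp.congr' ?_
  filter_upwards [eventually_ge_atTop a] with t ht
  exact (eq_mul_exp_of_hasDerivAt_neg ht fun s hs => hu s hs.1).symm

lemma LocallyLipschitz.exists_le_mul_of_map_zero {φ : ℝ → ℝ} (hφ : LocallyLipschitz φ)
    (h0 : φ 0 = 0) : ∃ r > 0, ∃ L ≥ (0 : ℝ), ∀ z ∈ Icc 0 r, φ z ≤ L * z := by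
  obtain ⟨K, t, ht, hK⟩ := hφ 0
  obtain ⟨ε, hε, hball⟩ := Metric.mem_nhds_iff.1 ht
  refine ⟨ε / 2, by positivity, K, K.2, fun z hz => ?_⟩
  have hzt : z ∈ t := hball <| by
    rw [Metric.mem_ball, Real.dist_eq, sub_zero, abs_of_nonneg hz.1]
    linarith [hz.2]
  have h := hK.dist_le_mul z hzt 0 (hball (Metric.mem_ball_self hε))
  rw [Real.dist_eq, Real.dist_eq, h0, sub_zero, sub_zero, abs_of_nonneg hz.1] at h
  exact (le_abs_self _).trans h

lemma ClassP.exists_monotoneOn_le {ρ : ℝ → ℝ} (hρ : ClassP ρ) {b : ℝ} (hb : 0 ≤ b) :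
    ∃ m : ℝ → ℝ, ClassP m ∧ MonotoneOn m (Icc 0 b) ∧ ∀ s ∈ Icc 0 b, m s ≤ ρ s := by
  set ρ' : ℝ → ℝ := fun s => ρ (max s 0)
  have hρ' : Continuous ρ' :=
    hρ.1.comp_continuous (continuous_id.max continuous_const) fun s => le_max_right s 0
  have hρ'_pos : ∀ s > 0, 0 < ρ' s := fun s hs => hρ.2.2 _ (hs.trans_le (le_max_left s 0))
  -- for `s ∈ [0, b]` this is the minimum of `ρ` over `[s, b]`, taken over a fixed compact set
  set m : ℝ → ℝ := fun s => sInf ((fun u => ρ' (max s u)) '' Icc 0 b)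
  have hm : Continuous m :=
    isCompact_Icc.continuous_sInf (hρ'.comp (continuous_fst.max continuous_snd))
  have hm_le : ∀ s, ∀ u ∈ Icc 0 b, m s ≤ ρ' (max s u) := fun s u hu =>
    csInf_le ((isCompact_Icc.image (hρ'.comp (continuous_const.max continuous_id))).bddBelow)
      (mem_image_of_mem _ hu)
  have hm_eq : ∀ s, ∃ u ∈ Icc 0 b, m s = ρ' (max s u) := fun s => by
    obtain ⟨u, hu, h⟩ := (isCompact_Icc.image
      (hρ'.comp (continuous_const.max continuous_id))).sInf_mem ((nonempty_Icc.2 hb).image _)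
    exact ⟨u, hu, h.symm⟩
  refine ⟨m, ⟨hm.continuousOn, ?_, fun s hs => ?_⟩, fun s hs t ht hst => ?_, fun s hs => ?_⟩
  · obtain ⟨u, -, hmu⟩ := hm_eq 0
    refine le_antisymm ?_ ?_
    · simpa [ρ', hρ.2.1] using hm_le 0 0 (left_mem_Icc.2 hb)
    · rw [hmu]
      exact hρ.nonneg_s4 (le_max_right _ _)
  · obtain ⟨u, -, hmu⟩ := hm_eq s
    exact hmu ▸ hρ'_pos _ (hs.trans_le (le_max_left s u))
  · obtain ⟨u, hu, hmu⟩ := hm_eq t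
    have := hm_le s (max t u) ⟨ht.1.trans (le_max_left t u), max_le ht.2 hu.2⟩
    rwa [max_eq_right (hst.trans (le_max_left t u)), ← hmu] at this
  · simpa [ρ', max_eq_left hs.1] using hm_le s s hs

lemma ClassP.hasDerivAt_exp_integral {p : ℝ → ℝ} (hp : ClassP p) (c : ℝ) {s : ℝ} (hs : 0 < s) :
    HasDerivAt (fun s => Real.exp (∫ t in (1 : ℝ)..s, c / p t))
      (Real.exp (∫ t in (1 : ℝ)..s, c / p t) * (c / p s)) s := by
  have hcont : ContinuousOn (fun t => c / p t) (Ioi 0) :=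
    continuousOn_const.div (hp.1.mono Ioi_subset_Ici_self) fun t ht => (hp.2.2 t ht).ne'
  have hint : IntervalIntegrable (fun t => c / p t) MeasureTheory.volume 1 s :=
    (hcont.mono fun t ht => lt_of_lt_of_le (lt_min one_pos hs) ht.1).intervalIntegrable
  exact (intervalIntegral.integral_hasDerivAt_right hint
    (hcont.stronglyMeasurableAtFilter isOpen_Ioi s hs)
    (hcont.continuousAt (Ioi_mem_nhds hs))).exp

lemma ClassP.exp_integral_le_one {p : ℝ → ℝ} (hp : ClassP p) {c s : ℝ} (hc : 0 ≤ c)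
    (hs : s ∈ Icc 0 1) : Real.exp (∫ t in (1 : ℝ)..s, c / p t) ≤ 1 := by
  refine Real.exp_le_one_iff.2 ?_
  rw [intervalIntegral.integral_symm, neg_nonpos]
  exact intervalIntegral.integral_nonneg hs.2 fun t ht =>
    div_nonneg hc (hp.nonneg_s4 (hs.1.trans ht.1))

lemma ClassP.strictMonoOn_exp_integral {p : ℝ → ℝ} (hp : ClassP p) {c : ℝ} (hc : 0 < c) :
    StrictMonoOn (fun s => Real.exp (∫ t in (1 : ℝ)..s, c / p t)) (Ioi 0) :=
  strictMonoOn_of_deriv_pos (convex_Ioi 0)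
    (fun s hs => (hp.hasDerivAt_exp_integral c hs).continuousAt.continuousWithinAt) fun s hs => by
    rw [interior_Ioi] at hs
    rw [(hp.hasDerivAt_exp_integral c hs).deriv]
    exact mul_pos (Real.exp_pos _) (div_pos hc (hp.2.2 s hs))

lemma classKInf_min_add_max {k : ℝ → ℝ} (hk : ContinuousOn k (Icc 0 1))
    (hk_mono : StrictMonoOn k (Icc 0 1)) (hk0 : k 0 = 0) :
    ClassKInf fun s => k (min s 1) + max (s - 1) 0 := by
  have hmin : MapsTo (fun s : ℝ => min s 1) (Ici 0) (Icc 0 1) :=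
    fun s hs => ⟨le_min hs zero_le_one, min_le_right s 1⟩
  have hk_nonneg : ∀ s ∈ Icc (0 : ℝ) 1, 0 ≤ k s := fun s hs =>
    hk0 ▸ hk_mono.monotoneOn (left_mem_Icc.2 zero_le_one) hs hs.1
  refine ⟨⟨(hk.comp (continuous_id.min continuous_const).continuousOn hmin).add
    (by fun_prop), fun s hs t ht hst => ?_, by simp [hk0]⟩, ?_⟩
  · rcases lt_or_ge s 1 with hs1 | hs1
    · exact add_lt_add_of_lt_of_le (hk_mono (hmin hs) (hmin ht) (by simp [hs1, hst]))
        (max_le_max_right 0 (by linarith))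
    · simp only [min_eq_right hs1, min_eq_right (hs1.trans hst.le)]
      rw [max_eq_left (by linarith), max_eq_left (by linarith)]
      linarith
  · refine tendsto_atTop_mono' atTop ?_ (tendsto_atTop_add_const_right _ (-1) tendsto_id)
    filter_upwards [eventually_ge_atTop 0] with s hs
    dsimp only [id]
    linarith [hk_nonneg _ (hmin hs), le_max_left (s - 1) 0]

lemma ClassP.exists_classKInf_le {α₀ ρ : ℝ → ℝ} (hα₀ : ClassP α₀) (hρ : ClassP ρ) {c : ℝ}
    (hc : 0 < c) :
    ∃ ψ E : ℝ → ℝ, ClassKInf ψ ∧ (∀ s, 0 < E s) ∧ (∀ s > 0, HasDerivAt E (E s * (c / α₀ s)) s) ∧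
      MonotoneOn (fun s => ψ s / E s) (Icc 0 1) ∧ ∀ s ∈ Icc 0 1, ψ s ≤ ρ s := by
  obtain ⟨m, hm, hm_mono, hm_le⟩ := hρ.exists_monotoneOn_le zero_le_one
  set E : ℝ → ℝ := fun s => Real.exp (∫ t in (1 : ℝ)..s, c / α₀ t)
  have hE : ∀ s > 0, HasDerivAt E (E s * (c / α₀ s)) s := fun s hs =>
    hα₀.hasDerivAt_exp_integral c hs
  have hE_pos : ∀ s, 0 < E s := fun s => Real.exp_pos _
  have hE_le : ∀ s ∈ Icc (0 : ℝ) 1, E s ≤ 1 := fun s hs => hα₀.exp_integral_le_one hc.le hs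
  have hE_mono : StrictMonoOn E (Ioi 0) := hα₀.strictMonoOn_exp_integral hc
  set k : ℝ → ℝ := fun s => E s * m s
  have hk_le : ∀ s ∈ Icc (0 : ℝ) 1, k s ≤ m s := fun s hs =>
    mul_le_of_le_one_left (hm.nonneg_s4 hs.1) (hE_le s hs)
  have hk_cont : ContinuousOn k (Icc 0 1) := by
    intro s hs
    rcases hs.1.eq_or_lt with rfl | hs0
    · -- `E` need not be continuous at `0`, but `0 < E ≤ 1` there and `m 0 = 0`
      have hm0 : Tendsto m (𝓝[Icc 0 1] 0) (𝓝 0) := by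
        have := (hm.1.continuousWithinAt self_mem_Ici).mono (s := Icc 0 1) fun t ht => ht.1
        rwa [ContinuousWithinAt, hm.2.1] at this
      rw [ContinuousWithinAt, show k 0 = 0 by simp [k, hm.2.1]]
      exact squeeze_zero' (eventually_nhdsWithin_of_forall fun t ht =>
          mul_nonneg (hE_pos t).le (hm.nonneg_s4 ht.1))
        (eventually_nhdsWithin_of_forall hk_le) hm0
    · exact ((hE s hs0).continuousAt.mul
        (hm.1.continuousAt (Ici_mem_nhds hs0))).continuousWithinAt
  have hk_mono : StrictMonoOn k (Icc 0 1) := by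
    intro s hs t ht hst
    have hmt := hm.2.2 t (hs.1.trans_lt hst)
    rcases hs.1.eq_or_lt with rfl | hs0
    · simpa [k, hm.2.1] using mul_pos (hE_pos t) hmt
    · calc k s = E s * m s := rfl
        _ ≤ E s * m t := mul_le_mul_of_nonneg_left (hm_mono hs ht hst.le) (hE_pos s).le
        _ < E t * m t := mul_lt_mul_of_pos_right (hE_mono hs0 (hs0.trans hst) hst) hmt
  refine ⟨_, E, classKInf_min_add_max hk_cont hk_mono (by simp [k, hm.2.1]),
    hE_pos, hE, ?_, fun s hs => ?_⟩
  · refine hm_mono.congr fun s hs => ?_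
    simp [min_eq_left hs.2, max_eq_right (sub_nonpos.2 hs.2), k, (hE_pos s).ne']
  · simpa [min_eq_left hs.2, max_eq_right (sub_nonpos.2 hs.2)] using
      (hk_le s hs).trans (hm_le s hs)

structure IsBarrierGain (α₀ β φ ψ E : ℝ → ℝ) : Prop where
  classKInf : ClassKInf ψ
  pos_s4 : ∀ s, 0 < E s
  hasDerivAt : ∀ s > 0, HasDerivAt E (E s * (4 / α₀ s)) s
  monotoneOn_div : MonotoneOn (fun s => ψ s / E s) (Icc 0 1)
  mul_le : ∀ s ∈ Icc 0 1, ∀ l ∈ Icc 0 (ψ s), β s * φ l ≤ α₀ s / 2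

lemma exists_isBarrierGain {α₀ β φ : ℝ → ℝ} (hα₀ : ClassP α₀) (hβ : Continuous β)
    (hφ : ClassK φ) (hφ_lip : LocallyLipschitz φ) : ∃ ψ E, IsBarrierGain α₀ β φ ψ E := by
  obtain ⟨r, hr, L, hL, hφL⟩ := hφ_lip.exists_le_mul_of_map_zero hφ.2.2
  have hden : ∀ s, 0 < 2 * (1 + L * |β s|) := fun s => by positivity
  set ρ : ℝ → ℝ := fun s => min r (α₀ s / (2 * (1 + L * |β s|)))
  have hρ : ClassP ρ :=
    ⟨continuousOn_const.inf (hα₀.1.div (by fun_prop) fun s _ => (hden s).ne'),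
      by simp [ρ, hα₀.2.1, hr.le], fun s hs => lt_min hr (div_pos (hα₀.2.2 s hs) (hden s))⟩
  obtain ⟨ψ, E, hψ, hE, hE', hψE, hψρ⟩ := hα₀.exists_classKInf_le hρ four_pos
  refine ⟨ψ, E, hψ, hE, hE', hψE, fun s hs l hl => ?_⟩
  have hψs : 0 ≤ ψ s := hψ.1.nonneg_s4 hs.1
  have hφl : φ l ≤ L * ρ s := calc
    φ l ≤ φ (ψ s) := hφ.2.1.monotoneOn hl.1 hψs hl.2
    _ ≤ L * ψ s := hφL _ ⟨hψs, (hψρ s hs).trans (min_le_left _ _)⟩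
    _ ≤ L * ρ s := mul_le_mul_of_nonneg_left (hψρ s hs) hL
  calc β s * φ l ≤ |β s| * (L * ρ s) :=
        mul_le_mul (le_abs_self _) hφl (hφ.nonneg_s4 hl.1) (abs_nonneg _)
    _ ≤ L * |β s| * (α₀ s / (2 * (1 + L * |β s|))) := by
        rw [mul_left_comm, ← mul_assoc]
        exact mul_le_mul_of_nonneg_left (min_le_right _ _) (by positivity)
    _ ≤ α₀ s / 2 := by
        rw [mul_div_assoc', div_le_div_iff₀ (hden s) two_pos]
        nlinarith [hα₀.nonneg_s4 hs.1, abs_nonneg (β s)]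

lemma eq_zero_of_hasDerivAt_nonpos {W W' : ℝ → ℝ} {t₀ T : ℝ}
    (hW : ∀ t ∈ Ico t₀ T, HasDerivAt W (W' t) t) (hW' : ∀ t ∈ Ico t₀ T, W' t ≤ 0)
    (hW_nonneg : ∀ t, 0 ≤ W t) (h₀ : W t₀ = 0) : ∀ t ∈ Ico t₀ T, W t = 0 := by
  intro t ht
  have hsub : Icc t₀ t ⊆ Ico t₀ T := Icc_subset_Ico_right ht.2
  have hanti : AntitoneOn W (Icc t₀ t) :=
    antitoneOn_of_hasDerivWithinAt_nonpos (convex_Icc t₀ t)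
      (fun u hu => (hW u (hsub hu)).continuousAt.continuousWithinAt)
      (fun u hu => (hW u (hsub (interior_subset hu))).hasDerivWithinAt)
      fun u hu => hW' u (hsub (interior_subset hu))
  exact le_antisymm (h₀ ▸ hanti (left_mem_Icc.2 ht.1) (right_mem_Icc.2 ht.1) ht.1)
    (hW_nonneg t)

namespace IsBarrierGain

variable {α₀ β φ ψ E W W' lam : ℝ → ℝ} {t₀ T : ℝ}

lemma forall_le_one (hψ : IsBarrierGain α₀ β φ ψ E) (hα₀ : ClassP α₀)
    (hW : ∀ t ∈ Ico t₀ T, HasDerivAt W (W' t) t)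
    (hW' : ∀ t ∈ Ico t₀ T, W' t ≤ -α₀ (W t) + β (W t) * φ |lam t|)
    (hlam : ∀ t ∈ Ico t₀ T, |lam t| ≤ ψ 1) (h₀ : W t₀ ≤ 1) : ∀ t ∈ Ico t₀ T, W t ≤ 1 := by
  intro t ht
  have hsub : Icc t₀ t ⊆ Ico t₀ T := Icc_subset_Ico_right ht.2
  refine le_on_Icc_of_eventually_lt_of_eq (g := fun _ => 1)
    (fun u hu => (hW u (hsub hu)).continuousAt.continuousWithinAt) continuousOn_const h₀
    (fun τ hτ hWτ => ?_) t (right_mem_Icc.2 ht.1)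
  have hτ : τ ∈ Ico t₀ T := hsub (Ico_subset_Icc_self hτ)
  have hgain := hψ.mul_le 1 (right_mem_Icc.2 zero_le_one) |lam τ| ⟨abs_nonneg _, hlam τ hτ⟩
  have hW'τ := hW' τ hτ
  rw [hWτ] at hW'τ
  have hneg : 0 < -W' τ := by linarith [hα₀.2.2 1 one_pos]
  filter_upwards [(hW τ hτ).neg.eventually_nhdsGT_lt hneg] with u hu
  simp only [Pi.neg_apply, neg_lt_neg_iff] at hu
  linarith

lemma forall_le_of_pos (hψ : IsBarrierGain α₀ β φ ψ E) (hα₀ : ClassP α₀)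
    (hlam : ∀ t ∈ Ico t₀ T, HasDerivAt lam (-lam t) t) (hlam_pos : ∀ t ∈ Ico t₀ T, 0 < lam t)
    (hW : ∀ t ∈ Ico t₀ T, HasDerivAt W (W' t) t)
    (hW' : ∀ t ∈ Ico t₀ T, W' t ≤ -α₀ (W t) + β (W t) * φ |lam t|)
    (hW_nonneg : ∀ t, 0 ≤ W t) (hW_le : ∀ t ∈ Ico t₀ T, W t ≤ 1) (h₀ : ψ (W t₀) ≤ lam t₀) :
    ∀ t ∈ Ico t₀ T, ψ (W t) ≤ lam t := by
  intro t ht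
  have hsub : Icc t₀ t ⊆ Ico t₀ T := Icc_subset_Ico_right ht.2
  have hW_cont : ContinuousOn W (Icc t₀ t) :=
    fun u hu => (hW u (hsub hu)).continuousAt.continuousWithinAt
  refine le_on_Icc_of_eventually_lt_of_eq (f := fun u => ψ (W u))
    (hψ.classKInf.1.1.comp hW_cont fun u _ => hW_nonneg u)
    (fun u hu => (hlam u (hsub hu)).continuousAt.continuousWithinAt) h₀
    (fun τ hτ hτeq => ?_) t (right_mem_Icc.2 ht.1)
  have hτ : τ ∈ Ico t₀ T := hsub (Ico_subset_Icc_self hτ)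
  have hs_pos : 0 < W τ := (hW_nonneg τ).lt_of_ne fun h => by
    rw [← h, hψ.classKInf.1.2.2] at hτeq
    exact (hlam_pos τ hτ).ne hτeq
  set s := W τ
  have hs : s ∈ Icc 0 1 := ⟨hs_pos.le, hW_le τ hτ⟩
  have hψs : 0 < ψ s := hψ.classKInf.1.pos_s4 hs_pos
  have hα₀s : 0 < α₀ s := hα₀.2.2 s hs_pos
  have hW'τ : W' τ ≤ -(α₀ s / 2) := by
    have hgain := hψ.mul_le s hs (ψ s) ⟨hψs.le, le_rfl⟩
    have hW'τ := hW' τ hτ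
    rw [abs_of_pos (hlam_pos τ hτ), ← hτeq] at hW'τ
    linarith
  -- `q E(W)` dominates `ψ(W)` below level `s` and decays faster than `λ` at `τ`
  set q := ψ s / E s
  have hqs : q * E s = ψ s := div_mul_cancel₀ _ (hψ.pos_s4 s).ne'
  have hG := (hlam τ hτ).sub (((hψ.hasDerivAt s hs_pos).comp τ (hW τ hτ)).const_mul q)
  have hG_pos : 0 < -lam τ - q * (E s * (4 / α₀ s) * W' τ) := by
    have hq : q * (E s * (4 / α₀ s) * W' τ) = 4 * ψ s * (W' τ / α₀ s) := by
      rw [← hqs]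
      ring
    have hrate : W' τ / α₀ s ≤ -1 / 2 := by
      rw [div_le_iff₀ hα₀s]
      linarith
    rw [hq, ← hτeq]
    nlinarith
  filter_upwards [hG.eventually_nhdsGT_lt hG_pos,
    (hW τ hτ).neg.eventually_nhdsGT_lt (by linarith)] with u hGu hWu
  simp only [Pi.sub_apply, Pi.neg_apply, Function.comp_apply, neg_lt_neg_iff] at hGu hWu
  calc ψ (W u) = ψ (W u) / E (W u) * E (W u) := (div_mul_cancel₀ _ (hψ.pos_s4 _).ne').symm
    _ ≤ q * E (W u) := mul_le_mul_of_nonneg_right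
        (hψ.monotoneOn_div ⟨hW_nonneg u, hWu.le.trans hs.2⟩ hs hWu.le) (hψ.pos_s4 _).le
    _ < lam u := by linarith

theorem forward_invariant (hψ : IsBarrierGain α₀ β φ ψ E) (hα₀ : ClassP α₀) (hφ0 : φ 0 = 0)
    (hlam : ∀ t ∈ Ico t₀ T, HasDerivAt lam (-lam t) t)
    (hW : ∀ t ∈ Ico t₀ T, HasDerivAt W (W' t) t)
    (hW' : ∀ t ∈ Ico t₀ T, W' t ≤ -α₀ (W t) + β (W t) * φ |lam t|)
    (hW_nonneg : ∀ t, 0 ≤ W t) (h₀ : W t₀ ≤ 1 ∧ ψ (W t₀) ≤ lam t₀ ∧ lam t₀ ≤ ψ 1) :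
    ∀ t ∈ Ico t₀ T, W t ≤ 1 ∧ ψ (W t) ≤ lam t ∧ lam t ≤ ψ 1 := by
  obtain ⟨hW₀, hψ₀, hlam₀⟩ := h₀
  have hψK := hψ.classKInf.1
  have hlam_eq : ∀ t ∈ Ico t₀ T, lam t = lam t₀ * Real.exp (t₀ - t) := fun t ht =>
    eq_mul_exp_of_hasDerivAt_neg ht.1 fun u hu => hlam u ⟨hu.1, hu.2.trans_lt ht.2⟩
  have hlam₀_nonneg : 0 ≤ lam t₀ := (hψK.nonneg_s4 (hW_nonneg t₀)).trans hψ₀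
  have hlam_abs : ∀ t ∈ Ico t₀ T, |lam t| = lam t := fun t ht =>
    abs_of_nonneg (hlam_eq t ht ▸ mul_nonneg hlam₀_nonneg (Real.exp_pos _).le)
  have hlam_le : ∀ t ∈ Ico t₀ T, lam t ≤ ψ 1 := fun t ht => by
    rw [hlam_eq t ht]
    exact (mul_le_of_le_one_right hlam₀_nonneg (Real.exp_le_one_iff.2 (by linarith [ht.1]))).trans
      hlam₀
  have hW_le :=
    hψ.forall_le_one hα₀ hW hW' (fun t ht => (hlam_abs t ht).trans_le (hlam_le t ht)) hW₀
  refine fun t ht => ⟨hW_le t ht, ?_, hlam_le t ht⟩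
  rcases hlam₀_nonneg.eq_or_lt with hzero | hpos
  · have hlam_zero : ∀ t ∈ Ico t₀ T, lam t = 0 := fun t ht => by simp [hlam_eq t ht, ← hzero]
    have hW₀_zero : W t₀ = 0 := (hW_nonneg t₀).antisymm' <|
      (hψK.2.1.le_iff_le (hW_nonneg t₀) self_mem_Ici).1 (by rw [hψK.2.2]; exact hzero ▸ hψ₀)
    have hW_zero := eq_zero_of_hasDerivAt_nonpos hW (fun t ht => by
      have := hW' t ht
      rw [hlam_zero t ht, abs_zero, hφ0, mul_zero, add_zero] at this
      linarith [hα₀.nonneg_s4 (hW_nonneg t)]) hW_nonneg hW₀_zero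
    rw [hW_zero t ht, hψK.2.2, hlam_zero t ht]
  · exact hψ.forall_le_of_pos hα₀ hlam
      (fun t ht => hlam_eq t ht ▸ mul_pos hpos (Real.exp_pos _)) hW hW' hW_nonneg hW_le hψ₀ t ht

end IsBarrierGain

lemma exists_forall_norm_le_of_continuousOn {F : Type*} [SeminormedAddCommGroup F] {u : ℝ → F}
    {t₀ t₁ C : ℝ} (hu : ContinuousOn u (Icc t₀ t₁)) (htail : ∀ t ≥ t₁, ‖u t‖ ≤ C) :
    ∃ M, ∀ t ∈ Ici t₀, ‖u t‖ ≤ M := by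
  obtain ⟨C', hC'⟩ := isCompact_Icc.exists_bound_of_continuousOn hu
  refine ⟨max C C', fun t ht => ?_⟩
  rcases le_total t t₁ with h | h
  · exact (hC' t ⟨ht, h⟩).trans (le_max_right _ _)
  · exact (htail t h).trans (le_max_left _ _)

lemma bounded_and_tendsto_of_barrier {F : Type*} [NormedAddCommGroup F] {V : F → ℝ}
    {αlow ψ : ℝ → ℝ} (hαlow : ClassKInf αlow) (hψ : ClassK ψ) (hV : ∀ y, αlow ‖y‖ ≤ V y)
    {x : ℝ → F} {lam : ℝ → ℝ} {t₀ t₁ : ℝ} (hx : ContinuousOn x (Ici t₀))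
    (hlam : ∀ t ∈ Ici t₀, HasDerivAt lam (-lam t) t)
    (hΩ : ∀ t ≥ t₁, V (x t) ≤ 1 ∧ ψ (V (x t)) ≤ lam t ∧ lam t ≤ ψ 1) :
    (∃ M, ∀ t ∈ Ici t₀, ‖x t‖ ≤ M ∧ |lam t| ≤ M) ∧
      (∃ lam' ∈ Icc 0 (ψ 1), Tendsto lam atTop (𝓝 lam')) ∧
      Tendsto (fun t => ‖x t‖) atTop (𝓝 0) := by
  have hV_nonneg : ∀ y, 0 ≤ V y := fun y => (hαlow.1.nonneg_s4 (norm_nonneg y)).trans (hV y)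
  have hlam0 : Tendsto lam atTop (𝓝 0) := tendsto_zero_of_hasDerivAt_neg hlam
  have hψV : Tendsto (fun t => ψ (V (x t))) atTop (𝓝 0) :=
    squeeze_zero' (.of_forall fun t => hψ.nonneg_s4 (hV_nonneg _))
      ((eventually_ge_atTop t₁).mono fun t ht => (hΩ t ht).2.1) hlam0
  have hVx := hψ.tendsto_zero_of_tendsto_comp (fun t => hV_nonneg _) hψV
  have hx0 : Tendsto (fun t => ‖x t‖) atTop (𝓝 0) :=
    hαlow.1.tendsto_zero_of_tendsto_comp (fun t => norm_nonneg _) <|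
      squeeze_zero' (.of_forall fun t => hαlow.1.nonneg_s4 (norm_nonneg _))
        (.of_forall fun t => hV (x t)) hVx
  obtain ⟨B, hB⟩ := eventually_atTop.1 (hαlow.2.eventually_gt_atTop 1)
  obtain ⟨Mx, hMx⟩ := exists_forall_norm_le_of_continuousOn (hx.mono Icc_subset_Ici_self)
    fun t ht => le_of_not_gt fun h => ((hB _ h.le).trans_le (hV _)).not_ge (hΩ t ht).1
  obtain ⟨Ml, hMl⟩ := exists_forall_norm_le_of_continuousOn (u := lam) (C := ψ 1)
    (fun t ht => (hlam t ht.1).continuousAt.continuousWithinAt) fun t ht => by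
      rw [Real.norm_eq_abs, abs_of_nonneg ((hψ.nonneg_s4 (hV_nonneg _)).trans (hΩ t ht).2.1)]
      exact (hΩ t ht).2.2
  exact ⟨⟨max Mx Ml, fun t ht => ⟨(hMx t ht).trans (le_max_left _ _),
      (hMl t ht).trans (le_max_right _ _)⟩⟩, ⟨0, ⟨le_rfl, hψ.nonneg_s4 zero_le_one⟩, hlam0⟩, hx0⟩

theorem existence_corollary_general
    {n : ℕ}
    (f : EuclideanSpace ℝ (Fin n) → ℝ → ℝ → EuclideanSpace ℝ (Fin n))
    -- Assumption 1 with α = -α₀, α₀ ∈ P, and φ locally Lipschitz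
    (V : EuclideanSpace ℝ (Fin n) → ℝ) (hV : ContDiff ℝ 1 V)
    (αlow αhigh : ℝ → ℝ) (hαlow : ClassKInf αlow)
    (α₀ β : ℝ → ℝ) (hα₀ : ClassP α₀) (hβ : Continuous β)
    (φ : ℝ → ℝ) (hφ : ClassK φ) (hφlip : LocallyLipschitz φ)
    (hVbound : ∀ x, αlow ‖x‖ ≤ V x ∧ V x ≤ αhigh ‖x‖)
    (hVdot : ∀ x lam t, fderiv ℝ V x (f x lam t) ≤ -α₀ (V x) + β (V x) * φ |lam|) :
    ∃ g : EuclideanSpace ℝ (Fin n) → ℝ → ℝ → ℝ,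
      (Continuous fun q : EuclideanSpace ℝ (Fin n) × ℝ × ℝ => g q.1 q.2.1 q.2.2) ∧
      ∃ ψ : ℝ → ℝ, ClassKInf ψ ∧ ∃ a : ℝ, 0 < a ∧
        -- forward invariance of Ω_a for the closed-loop system
        ((∀ (t₀ T : ℝ) (x : ℝ → EuclideanSpace ℝ (Fin n)) (lam : ℝ → ℝ),
          (∀ t ∈ Set.Ico t₀ T,
            HasDerivAt x (f (x t) (lam t) t) t ∧ HasDerivAt lam (g (x t) (lam t) t) t) →
          (V (x t₀) ∈ Set.Icc (0:ℝ) a ∧ ψ (V (x t₀)) ≤ lam t₀ ∧ lam t₀ ≤ ψ a) →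
          ∀ t ∈ Set.Ico t₀ T,
            V (x t) ∈ Set.Icc (0:ℝ) a ∧ ψ (V (x t)) ≤ lam t ∧ lam t ≤ ψ a) ∧
        -- boundedness and convergence for solutions on [t₀,∞) passing through Ω_a
        (∀ (t₀ : ℝ) (x : ℝ → EuclideanSpace ℝ (Fin n)) (lam : ℝ → ℝ),
          (∀ t ∈ Set.Ici t₀,
            HasDerivAt x (f (x t) (lam t) t) t ∧ HasDerivAt lam (g (x t) (lam t) t) t) →
          (∃ t₁ ∈ Set.Ici t₀,
            V (x t₁) ∈ Set.Icc (0:ℝ) a ∧ ψ (V (x t₁)) ≤ lam t₁ ∧ lam t₁ ≤ ψ a) →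
          (∃ M : ℝ, ∀ t ∈ Set.Ici t₀, ‖x t‖ ≤ M ∧ |lam t| ≤ M) ∧
          (∃ lam' ∈ Set.Icc (0:ℝ) (ψ a), Filter.Tendsto lam Filter.atTop (nhds lam')) ∧
          Filter.Tendsto (fun t => ‖x t‖) Filter.atTop (nhds 0))) := by
  obtain ⟨ψ, E, hψ⟩ := exists_isBarrierGain hα₀ hβ hφ hφlip
  have hV_nonneg : ∀ y, 0 ≤ V y := fun y =>
    (hαlow.1.nonneg_s4 (norm_nonneg y)).trans (hVbound y).1
  have hinv : ∀ (t₀ T : ℝ) (x : ℝ → EuclideanSpace ℝ (Fin n)) (lam : ℝ → ℝ),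
      (∀ t ∈ Ico t₀ T, HasDerivAt x (f (x t) (lam t) t) t ∧ HasDerivAt lam (-lam t) t) →
      (V (x t₀) ∈ Icc 0 1 ∧ ψ (V (x t₀)) ≤ lam t₀ ∧ lam t₀ ≤ ψ 1) →
      ∀ t ∈ Ico t₀ T, V (x t) ∈ Icc 0 1 ∧ ψ (V (x t)) ≤ lam t ∧ lam t ≤ ψ 1 := by
    intro t₀ T x lam hsol ⟨hV₀, h₀⟩ t ht
    obtain ⟨hV_le, h⟩ := hψ.forward_invariant hα₀ hφ.2.2 (fun t ht => (hsol t ht).2)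
      (fun t ht => (hV.differentiable one_ne_zero (x t)).hasFDerivAt.comp_hasDerivAt t
        (hsol t ht).1)
      (fun t _ => hVdot (x t) (lam t) t) (fun t => hV_nonneg (x t)) ⟨hV₀.2, h₀⟩ t ht
    exact ⟨⟨hV_nonneg _, hV_le⟩, h⟩
  refine ⟨fun _ l _ => -l, by fun_prop, ψ, hψ.classKInf, 1, one_pos, hinv, ?_⟩
  rintro t₀ x lam hsol ⟨t₁, ht₁, hΩ⟩
  exact bounded_and_tendsto_of_barrier hαlow hψ.classKInf.1 (fun y => (hVbound y).1)
    (fun t ht => (hsol t ht).1.continuousAt.continuousWithinAt) (fun t ht => (hsol t ht).2)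
    fun t ht => (hinv t₁ (t + 1) x lam (fun u hu => hsol u (ht₁.trans hu.1)) hΩ t
      ⟨ht, lt_add_one t⟩).imp_left And.right

/-- **Existence Corollary.**
For the control system `ẋ = f(x,λ,t)`, `λ̇ = u`, with `f` satisfying Assumption 1 with
locally Lipschitz `φ ∈ K` and `α(V) = -α₀(V)`, `α₀ ∈ P`, there exist a continuous feedback
`g`, a class-K∞ function `ψ` and `a > 0` such that the set
`Ω_a = {(x,λ) : 0 ≤ V(x) ≤ a, ψ(V(x)) ≤ λ ≤ ψ(a)}` is forward invariant for the closed-loop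
system, all solutions passing through `Ω_a` are bounded in forward time, and every such
solution defined on `[t₀,∞)` satisfies `λ(t) → λ' ∈ [0,ψ(a)]` and `‖x(t)‖ → 0`. -/
theorem existence_corollary
    {n : ℕ}
    (f : EuclideanSpace ℝ (Fin n) → ℝ → ℝ → EuclideanSpace ℝ (Fin n))
    (hf_cont : Continuous fun q : EuclideanSpace ℝ (Fin n) × ℝ × ℝ => f q.1 q.2.1 q.2.2)
    (hf_lip : ∀ p : EuclideanSpace ℝ (Fin n) × ℝ, ∃ s ∈ nhds p, ∃ L : NNReal,
      ∀ t : ℝ, LipschitzOnWith L (fun q : EuclideanSpace ℝ (Fin n) × ℝ => f q.1 q.2 t) s)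
    -- Assumption 1 with α = -α₀, α₀ ∈ P, and φ locally Lipschitz
    (V : EuclideanSpace ℝ (Fin n) → ℝ) (hV : ContDiff ℝ 1 V)
    (αlow αhigh : ℝ → ℝ) (hαlow : ClassKInf αlow) (hαhigh : ClassKInf αhigh)
    (α₀ β : ℝ → ℝ) (hα₀ : ClassP α₀) (hβ : Continuous β)
    (φ : ℝ → ℝ) (hφ : ClassK φ) (hφlip : LocallyLipschitz φ)
    (hVbound : ∀ x, αlow ‖x‖ ≤ V x ∧ V x ≤ αhigh ‖x‖)
    (hVdot : ∀ x lam t, fderiv ℝ V x (f x lam t) ≤ -α₀ (V x) + β (V x) * φ |lam|) :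
    ∃ g : EuclideanSpace ℝ (Fin n) → ℝ → ℝ → ℝ,
      (Continuous fun q : EuclideanSpace ℝ (Fin n) × ℝ × ℝ => g q.1 q.2.1 q.2.2) ∧
      ∃ ψ : ℝ → ℝ, ClassKInf ψ ∧ ∃ a : ℝ, 0 < a ∧
        -- forward invariance of Ω_a for the closed-loop system
        ((∀ (t₀ T : ℝ) (x : ℝ → EuclideanSpace ℝ (Fin n)) (lam : ℝ → ℝ),
          (∀ t ∈ Set.Ico t₀ T,
            HasDerivAt x (f (x t) (lam t) t) t ∧ HasDerivAt lam (g (x t) (lam t) t) t) →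
          (V (x t₀) ∈ Set.Icc (0:ℝ) a ∧ ψ (V (x t₀)) ≤ lam t₀ ∧ lam t₀ ≤ ψ a) →
          ∀ t ∈ Set.Ico t₀ T,
            V (x t) ∈ Set.Icc (0:ℝ) a ∧ ψ (V (x t)) ≤ lam t ∧ lam t ≤ ψ a) ∧
        -- boundedness and convergence for solutions on [t₀,∞) passing through Ω_a
        (∀ (t₀ : ℝ) (x : ℝ → EuclideanSpace ℝ (Fin n)) (lam : ℝ → ℝ),
          (∀ t ∈ Set.Ici t₀,
            HasDerivAt x (f (x t) (lam t) t) t ∧ HasDerivAt lam (g (x t) (lam t) t) t) →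
          (∃ t₁ ∈ Set.Ici t₀,
            V (x t₁) ∈ Set.Icc (0:ℝ) a ∧ ψ (V (x t₁)) ≤ lam t₁ ∧ lam t₁ ≤ ψ a) →
          (∃ M : ℝ, ∀ t ∈ Set.Ici t₀, ‖x t‖ ≤ M ∧ |lam t| ≤ M) ∧
          (∃ lam' ∈ Set.Icc (0:ℝ) (ψ a), Filter.Tendsto lam Filter.atTop (nhds lam')) ∧
          Filter.Tendsto (fun t => ‖x t‖) Filter.atTop (nhds 0))) :=
  existence_corollary_general f V hV αlow αhigh hαlow α₀ β hα₀ hβ φ hφ hφlip hVbound hVdot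
end
end

section
/- Let α₀ be a function of class P, let β : [0,∞) → ℝ be continuous, and let φ be a function of class K that is locally Lipschitz. Then there exist a constant a > 0 and functions ψ and γ of class P such that the epigraph of the restriction of ψ to [0,a] is star-shaped with respect to the origin and ψ(V)·[−α₀(V) + β(V)·φ(ψ(V))] + V·γ(V) ≤ 0 for all V ∈ [0,a]. -/
open Set Filter Topology

noncomputable section

/-- A set `S` is star-shaped with respect to a point `c ∈ S` when, for every `y ∈ S`,
the segment `[c,y]` lies in `S`. -/
def StarShapedWrt {E : Type*} [AddCommGroup E] [Module ℝ E] (S : Set E) (c : E) : Prop :=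
  c ∈ S ∧ ∀ y ∈ S, segment ℝ c y ⊆ S

/-!
Let `m t = min_{[t,1]} α₀`: it is continuous, nondecreasing, positive for `t > 0`, and
`m ≤ α₀` on `[0,1]`. Take `a = 1`, `ψ V = k V m(V)` and `γ V = (k/2) m(V) α₀(V)`, so that
`V γ(V) = ψ(V) α₀(V)/2`. Since `ψ(V)/V = k m(V)` is nondecreasing, the epigraph of `ψ` on
`[0,1]` is star-shaped about the origin. Near `0`, `φ` is Lipschitz and vanishes at `0`, and
`β` is bounded on `[0,1]`, so `β φ(ψ) ≤ L ψ ≤ k L α₀ ≤ α₀/2` once `k` is small; this absorbs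
the `β φ(ψ)` term.
-/

namespace ClassP

variable {p q : ℝ → ℝ}

theorem nonneg (hp : ClassP p) {s : ℝ} (hs : 0 ≤ s) : 0 ≤ p s := by
  rcases hs.eq_or_lt with rfl | hs
  · exact hp.2.1.ge
  · exact (hp.2.2 s hs).le

theorem id : ClassP fun x => x :=
  ⟨continuousOn_id, rfl, fun _ hs => hs⟩

theorem mul (hp : ClassP p) (hq : ClassP q) : ClassP fun x => p x * q x :=
  ⟨hp.1.mul hq.1, mul_eq_zero_of_left hp.2.1 _, fun s hs => mul_pos (hp.2.2 s hs) (hq.2.2 s hs)⟩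

theorem const_mul (hp : ClassP p) {c : ℝ} (hc : 0 < c) : ClassP fun x => c * p x :=
  ⟨continuousOn_const.mul hp.1, mul_eq_zero_of_right c hp.2.1,
    fun s hs => mul_pos hc (hp.2.2 s hs)⟩

end ClassP

/-- For `t ≤ b` this is `min_{s ∈ [t, b]} f s`, since `u ↦ max t u` maps `[0, b]` onto
`[max t 0, b]`; parametrizing by the fixed compact set `[0, b]` makes continuity in `t` easy. -/
def runningMin (f : ℝ → ℝ) (b t : ℝ) : ℝ :=
  sInf ((fun u => f (max t u)) '' Icc 0 b)

section RunningMin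

variable {f : ℝ → ℝ} {b t : ℝ}

theorem isCompact_image_max (hf : ContinuousOn f (Ici 0)) (b t : ℝ) :
    IsCompact ((fun u => f (max t u)) '' Icc 0 b) :=
  isCompact_Icc.image_of_continuousOn <|
    hf.comp (by fun_prop) fun _ hu => le_max_of_le_right hu.1

theorem runningMin_le (hf : ContinuousOn f (Ici 0)) {u : ℝ} (hu : u ∈ Icc 0 b) :
    runningMin f b t ≤ f (max t u) :=
  csInf_le (isCompact_image_max hf b t).bddBelow (mem_image_of_mem _ hu)

theorem runningMin_le_apply (hf : ContinuousOn f (Ici 0)) (hb : 0 ≤ b) (ht : 0 ≤ t) :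
    runningMin f b t ≤ f t := by
  simpa [max_eq_left ht] using runningMin_le hf (t := t) ⟨le_rfl, hb⟩

theorem runningMin_le_apply_right (hf : ContinuousOn f (Ici 0)) (hb : 0 ≤ b) (htb : t ≤ b) :
    runningMin f b t ≤ f b := by
  simpa [max_eq_right htb] using runningMin_le hf (t := t) ⟨hb, le_rfl⟩

theorem exists_runningMin_eq (hf : ContinuousOn f (Ici 0)) (hb : 0 ≤ b) (t : ℝ) :
    ∃ u ∈ Icc 0 b, f (max t u) = runningMin f b t :=
  (isCompact_image_max hf b t).sInf_mem ((nonempty_Icc.mpr hb).image _)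

theorem monotoneOn_runningMin (hf : ContinuousOn f (Ici 0)) (hb : 0 ≤ b) :
    MonotoneOn (runningMin f b) (Iic b) := by
  intro t _ t' ht' htt'
  refine le_csInf ((nonempty_Icc.mpr hb).image _) ?_
  rintro _ ⟨u, hu, rfl⟩
  have hu' : max t' u ∈ Icc 0 b := ⟨le_max_of_le_right hu.1, max_le ht' hu.2⟩
  simpa only [← max_assoc, max_eq_right htt'] using runningMin_le hf hu' (t := t)

theorem continuous_runningMin (hf : ContinuousOn f (Ici 0)) : Continuous (runningMin f b) := by
  have hg : Continuous fun p : ℝ × ℝ => f (max (max p.1 p.2) 0) :=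
    hf.comp_continuous (by fun_prop) fun _ => mem_Ici.mpr (le_max_right _ 0)
  convert (isCompact_Icc (a := 0) (b := b)).continuous_sInf
    (f := fun t u => f (max (max t u) 0)) hg using 3 with t
  refine congrArg sInf <| image_congr fun u hu => ?_
  rw [max_eq_left (le_max_of_le_right hu.1)]

theorem ClassP.runningMin (hf : ClassP f) (hb : 0 ≤ b) : ClassP (runningMin f b) := by
  refine ⟨(continuous_runningMin hf.1).continuousOn, le_antisymm ?_ ?_, fun t ht => ?_⟩
  · exact (runningMin_le_apply hf.1 hb le_rfl).trans_eq hf.2.1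
  · obtain ⟨u, hu, hmin⟩ := exists_runningMin_eq hf.1 hb 0
    exact hmin ▸ hf.nonneg (le_max_of_le_right hu.1)
  · obtain ⟨u, -, hmin⟩ := exists_runningMin_eq hf.1 hb t
    exact hmin ▸ hf.2.2 _ (lt_max_of_lt_left ht)

theorem mul_runningMin_le (hf : ClassP f) {V : ℝ} (hV : V ∈ Icc 0 1) :
    V * runningMin f 1 V ≤ min (f V) (f 1) := by
  have hVm := mul_le_of_le_one_left ((hf.runningMin zero_le_one).nonneg hV.1) hV.2
  exact le_min (hVm.trans (runningMin_le_apply hf.1 zero_le_one hV.1))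
    (hVm.trans (runningMin_le_apply_right hf.1 zero_le_one hV.2))

end RunningMin

theorem starShapedWrt_epigraph_mul {g : ℝ → ℝ} {a : ℝ} (ha : 0 ≤ a)
    (hg : MonotoneOn g (Icc 0 a)) :
    StarShapedWrt {q : ℝ × ℝ | q.1 ∈ Icc 0 a ∧ q.1 * g q.1 ≤ q.2} (0, 0) := by
  refine ⟨⟨⟨le_rfl, ha⟩, by simp⟩, fun y hy => ?_⟩
  refine starConvex_iff_segment_subset.mp (starConvex_zero_iff.mpr ?_) hy
  rintro ⟨V, μ⟩ ⟨hV, hVμ⟩ θ hθ0 hθ1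
  have hθV : θ * V ∈ Icc 0 a :=
    ⟨mul_nonneg hθ0 hV.1, (mul_le_of_le_one_left hV.1 hθ1).trans hV.2⟩
  refine ⟨hθV, ?_⟩
  calc θ * V * g (θ * V) ≤ θ * V * g V :=
        mul_le_mul_of_nonneg_left (hg hθV hV (mul_le_of_le_one_left hV.1 hθ1)) hθV.1
    _ = θ * (V * g V) := mul_assoc _ _ _
    _ ≤ θ * μ := mul_le_mul_of_nonneg_left hVμ hθ0

theorem LocallyLipschitz.exists_abs_le_mul_abs {φ : ℝ → ℝ} (hφ : LocallyLipschitz φ)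
    (h0 : φ 0 = 0) : ∃ K δ : ℝ, 0 < δ ∧ ∀ s, |s| < δ → |φ s| ≤ K * |s| := by
  obtain ⟨K, t, ht, hK⟩ := hφ 0
  obtain ⟨δ, hδ, hball⟩ := Metric.mem_nhds_iff.mp ht
  refine ⟨K, δ, hδ, fun s hs => ?_⟩
  have hs' : s ∈ Metric.ball 0 δ := by rwa [Metric.mem_ball, Real.dist_0_eq_abs]
  simpa [Real.dist_0_eq_abs, h0] using
    hK.dist_le_mul s (hball hs') 0 (hball (Metric.mem_ball_self hδ))

theorem IsCompact.exists_mul_le_mul_abs_of_locallyLipschitz {S : Set ℝ} (hS : IsCompact S)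
    {β φ : ℝ → ℝ} (hβ : ContinuousOn β S) (hφ : LocallyLipschitz φ) (h0 : φ 0 = 0) :
    ∃ L δ : ℝ, 0 < δ ∧ ∀ V ∈ S, ∀ s, |s| < δ → β V * φ s ≤ L * |s| := by
  obtain ⟨K, δ, hδ, hK⟩ := hφ.exists_abs_le_mul_abs h0
  obtain ⟨M, hM⟩ := hS.exists_bound_of_continuousOn hβ
  refine ⟨M * K, δ, hδ, fun V hV s hs => ?_⟩
  calc β V * φ s ≤ |β V| * |φ s| := (le_abs_self _).trans_eq (abs_mul _ _)
    _ ≤ M * (K * |s|) :=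
      mul_le_mul (hM V hV) (hK s hs) (abs_nonneg _) ((norm_nonneg _).trans (hM V hV))
    _ = M * K * |s| := (mul_assoc _ _ _).symm

theorem exists_pos_mul_lt_and_mul_lt {a b c d : ℝ} (ha : 0 < a) (hc : 0 < c) :
    ∃ k > 0, k * b < a ∧ k * d < c := by
  have small (x y : ℝ) (hy : 0 < y) : ∀ᶠ k in 𝓝[>] (0 : ℝ), k * x < y :=
    nhdsWithin_le_nhds <| ((continuous_mul_const x).tendsto' 0 0 (zero_mul x)).eventually
      (gt_mem_nhds hy)
  exact (eventually_mem_nhdsWithin.and ((small b a ha).and (small d c hc))).exists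

/-- For `α₀ ∈ P`, `β` continuous and `φ ∈ K` locally Lipschitz, there exist `a > 0` and
functions `ψ, γ ∈ P` such that the epigraph of the restriction of `ψ` to `[0,a]` is
star-shaped with respect to the origin and
`ψ(V)[−α₀(V) + β(V)φ(ψ(V))] + V·γ(V) ≤ 0` for all `V ∈ [0,a]`. -/
theorem exists_star_shaped_psi
    (α₀ : ℝ → ℝ) (hα₀ : ClassP α₀)
    (β : ℝ → ℝ) (hβ : Continuous β)
    (φ : ℝ → ℝ) (hφ : ClassK φ) (hφlip : LocallyLipschitz φ) :
    ∃ a : ℝ, 0 < a ∧ ∃ ψ γ : ℝ → ℝ, ClassP ψ ∧ ClassP γ ∧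
      StarShapedWrt {q : ℝ × ℝ | q.1 ∈ Set.Icc (0:ℝ) a ∧ ψ q.1 ≤ q.2} ((0:ℝ), (0:ℝ)) ∧
      ∀ v ∈ Set.Icc (0:ℝ) a, ψ v * (-α₀ v + β v * φ (ψ v)) + v * γ v ≤ 0 := by
  obtain ⟨L, δ, hδ, hβφ⟩ := isCompact_Icc.exists_mul_le_mul_abs_of_locallyLipschitz
    (hβ.continuousOn (s := Icc 0 1)) hφlip hφ.2.2
  obtain ⟨k, hk, hkL, hkδ⟩ :=
    exists_pos_mul_lt_and_mul_lt (b := L) (d := α₀ 1) one_half_pos hδ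
  set m := runningMin α₀ 1
  have hm : ClassP m := hα₀.runningMin zero_le_one
  set ψ : ℝ → ℝ := fun V => V * (k * m V)
  have hψ : ClassP ψ := ClassP.id.mul (hm.const_mul hk)
  have key : ∀ V ∈ Icc (0:ℝ) 1, β V * φ (ψ V) ≤ α₀ V / 2 := by
    intro V hV
    obtain ⟨hVα, hV1⟩ := le_min_iff.mp (mul_runningMin_le hα₀ hV)
    have hψV : |ψ V| = k * (V * m V) := by
      rw [abs_of_nonneg (hψ.nonneg hV.1)]
      exact mul_left_comm _ _ _
    have hψδ : |ψ V| < δ := hψV ▸ (mul_le_mul_of_nonneg_left hV1 hk.le).trans_lt hkδ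
    calc β V * φ (ψ V) ≤ L * |ψ V| := hβφ V hV _ hψδ
      _ = k * L * (V * m V) := by rw [hψV]; ring
      _ ≤ 1 / 2 * α₀ V :=
          mul_le_mul hkL.le hVα (mul_nonneg hV.1 (hm.nonneg hV.1)) one_half_pos.le
      _ = α₀ V / 2 := by ring
  have hg : MonotoneOn (fun V => k * m V) (Icc 0 1) := fun x hx y hy hxy =>
    mul_le_mul_of_nonneg_left
      ((monotoneOn_runningMin hα₀.1 zero_le_one).mono Icc_subset_Iic_self hx hy hxy) hk.le
  refine ⟨1, one_pos, ψ, fun V => k / 2 * m V * α₀ V, hψ,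
    (hm.const_mul (half_pos hk)).mul hα₀, starShapedWrt_epigraph_mul zero_le_one hg,
    fun V hV => ?_⟩
  calc ψ V * (-α₀ V + β V * φ (ψ V)) + V * (k / 2 * m V * α₀ V)
      = ψ V * (β V * φ (ψ V) - α₀ V / 2) := by ring
    _ ≤ 0 := mul_nonpos_of_nonneg_of_nonpos (hψ.nonneg hV.1) (sub_nonpos.mpr (key V hV))
end
end

section
/- Consider the system ẋ = f(x,t) + b(x,λ,t), λ̇ = −γ‖x‖ with γ > 0, where f : ℝⁿ×ℝ → ℝⁿ and b : ℝⁿ×ℝ×ℝ → ℝⁿ are continuous, b is Lipschitz in λ with constant B (‖b(x,λ,t) − b(x,λ',t)‖ ≤ B|λ − λ'|) and b(x,0,t) = 0, and there exists a quadratic function V(x) = xᵀPx with P = Pᵀ > 0 such that p̲‖x‖² ≤ V(x) ≤ p̄‖x‖², ‖Px‖ ≤ σ‖x‖, and ⟨∇V(x), f(x,t)⟩ ≤ −k·V(x) for some k > 0. If γ < k²·p̲/(16·σ·B), then every solution (x(·),λ(·)) with λ(t₀) ≥ ‖x(t₀)‖·k·√(p̲·p̄)/(4σB) is bounded in forward time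 and satisfies λ(t) ≥ ‖x(t)‖·k·p̲/(4σB) for all t ≥ t₀ in its interval of existence. -/
/-! The sign of `λ` is not known in advance, so it enters through the signed square `λ|λ|`,
which is `C¹` with derivative `2|λ|`. The function `α V(x) - λ|λ|`, `α = (k/(4σB))² p̲`, starts
nonpositive by the choice of `λ(t₀)`, and wherever it is positive the small-gain condition bounds its
derivative by `k` times itself; a comparison argument keeps it nonpositive. With `V ≥ p̲‖x‖²`
this is `λ ≥ β‖x‖`, `β = k p̲/(4σB)`, and since `λ` is nonincreasing, `‖x‖ ≤ λ(t₀)/β` and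
`0 ≤ λ ≤ λ(t₀)`. -/

open Set Filter Topology RealInnerProductSpace

theorem hasDerivAt_mul_abs (a : ℝ) : HasDerivAt (fun u : ℝ => u * |u|) (2 * |a|) a := by
  rcases eq_or_ne a 0 with rfl | ha
  · rw [hasDerivAt_iff_tendsto_slope, abs_zero, mul_zero]
    refine Tendsto.congr' ?_ ((continuous_abs.tendsto' 0 0 abs_zero).mono_left nhdsWithin_le_nhds)
    filter_upwards [self_mem_nhdsWithin] with u (hu : u ≠ 0)
    rw [slope_def_field]
    field_simp
    simp
  · refine ((hasDerivAt_id' a).mul (hasDerivAt_abs ha)).congr_deriv ?_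
    rw [self_mul_sign]
    ring

theorem sq_le_mul_abs_iff {a L : ℝ} (ha : 0 ≤ a) : a ^ 2 ≤ L * |L| ↔ a ≤ L := by
  rcases le_or_gt 0 L with hL | hL
  · rw [abs_of_nonneg hL, ← sq, pow_le_pow_iff_left₀ ha hL two_ne_zero]
  · constructor <;> intro h <;> nlinarith [abs_of_neg hL]

theorem nonpos_of_hasDerivAt_le_mul_of_pos {g g' : ℝ → ℝ} {t₀ T K : ℝ}
    (hg : ∀ s ∈ Ico t₀ T, HasDerivAt g (g' s) s) (h₀ : g t₀ ≤ 0)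
    (hK : ∀ s ∈ Ico t₀ T, 0 < g s → g' s ≤ K * g s) :
    ∀ t ∈ Ico t₀ T, g t ≤ 0 := by
  intro t ht
  have hsub : Icc t₀ t ⊆ Ico t₀ T := Icc_subset_Ico_right ht.2
  refine le_of_forall_pos_le_add fun ε hε => ?_
  -- the barrier `ε e^{(K+1)(s-t)}` grows strictly faster than `g` can where they meet
  have hC : ∀ s, HasDerivAt (fun s => ε * Real.exp ((K + 1) * (s - t)))
      (ε * Real.exp ((K + 1) * (s - t)) * (K + 1)) s := fun s => by
    simpa [mul_assoc] using
      ((((hasDerivAt_id s).sub_const t).const_mul (K + 1)).exp).const_mul ε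
  have := image_le_of_deriv_right_lt_deriv_boundary
    (fun s hs => (hg s (hsub hs)).continuousAt.continuousWithinAt)
    (fun s hs => (hg s (hsub (Ico_subset_Icc_self hs))).hasDerivWithinAt)
    (h₀.trans (by positivity)) hC
    (fun s hs hgs => by
      have hpos : 0 < ε * Real.exp ((K + 1) * (s - t)) := by positivity
      have := hK s (hsub (Ico_subset_Icc_self hs)) (hgs ▸ hpos)
      rw [hgs] at this
      linarith)
    (right_mem_Icc.2 ht.1)
  simpa using this

theorem fderiv_inner_self_apply_add_le {E : Type*} [NormedAddCommGroup E] [InnerProductSpace ℝ E]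
    (P : E →L[ℝ] E) {σ : ℝ} (hP : ∀ x, ‖P x‖ ≤ σ * ‖x‖) (x u w : E) :
    fderiv ℝ (fun y => ⟪y, P y⟫) x (u + w) ≤
      fderiv ℝ (fun y => ⟪y, P y⟫) x u + 2 * σ * ‖x‖ * ‖w‖ := by
  rw [map_add, add_le_add_iff_left, fderiv_inner_apply ℝ differentiableAt_fun_id P.differentiableAt]
  simp only [fderiv_fun_id, ContinuousLinearMap.fderiv, ContinuousLinearMap.id_apply]
  have h₁ : ⟪x, P w⟫ ≤ ‖x‖ * (σ * ‖w‖) :=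
    (real_inner_le_norm _ _).trans (mul_le_mul_of_nonneg_left (hP w) (norm_nonneg x))
  have h₂ : ⟪w, P x⟫ ≤ ‖w‖ * (σ * ‖x‖) :=
    (real_inner_le_norm _ _).trans (mul_le_mul_of_nonneg_left (hP x) (norm_nonneg w))
  linarith

theorem mul_mul_abs_le_two_mul_sub {β X L v : ℝ} (hβX : (β * X) ^ 2 ≤ v) (hL : L * |L| ≤ v) :
    β * X * |L| ≤ 2 * v - L * |L| := by
  have hAMGM : β * X * |L| ≤ ((β * X) ^ 2 + |L| ^ 2) / 2 := by
    nlinarith [sq_nonneg (β * X - |L|)]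
  rcases le_or_gt 0 L with h | h
  · rw [abs_of_nonneg h] at hAMGM hL ⊢
    nlinarith
  · rw [abs_of_neg h] at hAMGM hL ⊢
    nlinarith

theorem le_of_small_gain {V V' X L : ℝ → ℝ} {t₀ T k c γ p : ℝ}
    (hk : 0 < k) (hc : 0 < c) (hp : 0 ≤ p) (hγ : γ < k ^ 2 * p / (16 * c))
    (hX : ∀ s ∈ Ico t₀ T, 0 ≤ X s) (hVX : ∀ s ∈ Ico t₀ T, p * X s ^ 2 ≤ V s)
    (hV : ∀ s ∈ Ico t₀ T, HasDerivAt V (V' s) s)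
    (hV' : ∀ s ∈ Ico t₀ T, V' s ≤ -(k * V s) + 2 * c * X s * |L s|)
    (hL : ∀ s ∈ Ico t₀ T, HasDerivAt L (-(γ * X s)) s)
    (h₀ : (k / (4 * c)) ^ 2 * p * V t₀ ≤ L t₀ * |L t₀|) :
    ∀ t ∈ Ico t₀ T, k * p / (4 * c) * X t ≤ L t := by
  set α := (k / (4 * c)) ^ 2 * p with hα
  set β := k * p / (4 * c) with hβ
  have hβα : ∀ s ∈ Ico t₀ T, (β * X s) ^ 2 ≤ α * V s := fun s hs => by
    calc (β * X s) ^ 2 = α * (p * X s ^ 2) := by ring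
      _ ≤ α * V s := mul_le_mul_of_nonneg_left (hVX s hs) (by positivity)
  have hgain : 2 * α * c + 2 * γ ≤ k * β := by
    have : k ^ 2 * p / (16 * c) = α * c := by rw [hα]; field_simp; ring
    have : k * β = 4 * (α * c) := by rw [hα, hβ]; field_simp
    linarith
  have barrier : ∀ t ∈ Ico t₀ T, α * V t - L t * |L t| ≤ 0 := by
    refine nonpos_of_hasDerivAt_le_mul_of_pos (K := k)
      (fun s hs => ((hV s hs).const_mul α).sub ((hasDerivAt_mul_abs (L s)).comp s (hL s hs)))
      (sub_nonpos.2 h₀) fun s hs hpos => ?_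
    have hXL : 0 ≤ X s * |L s| := mul_nonneg (hX s hs) (abs_nonneg _)
    have hLv := mul_mul_abs_le_two_mul_sub (hβα s hs) (sub_pos.1 hpos).le
    calc α * V' s - 2 * |L s| * -(γ * X s)
        ≤ α * (-(k * V s) + 2 * c * X s * |L s|) + 2 * γ * (X s * |L s|) := by
          nlinarith [mul_le_mul_of_nonneg_left (hV' s hs) (by positivity : (0:ℝ) ≤ α)]
      _ = -(k * (α * V s)) + (2 * α * c + 2 * γ) * (X s * |L s|) := by ring
      _ ≤ -(k * (α * V s)) + k * (β * X s * |L s|) := by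
          nlinarith [mul_le_mul_of_nonneg_right hgain hXL]
      _ ≤ k * (α * V s - L s * |L s|) := by nlinarith [mul_le_mul_of_nonneg_left hLv hk.le]
  intro t ht
  rw [← sq_le_mul_abs_iff (mul_nonneg (by positivity) (hX t ht))]
  exact (hβα t ht).trans (sub_nonpos.1 (barrier t ht))

theorem nonuniform_small_gain_general
    {n : ℕ}
    (f : EuclideanSpace ℝ (Fin n) → ℝ → EuclideanSpace ℝ (Fin n))
    (b : EuclideanSpace ℝ (Fin n) → ℝ → ℝ → EuclideanSpace ℝ (Fin n))
    (B : ℝ) (hB : 0 < B)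
    (hb_lip : ∀ (x : EuclideanSpace ℝ (Fin n)) (lam lam' t : ℝ),
      ‖b x lam t - b x lam' t‖ ≤ B * |lam - lam'|)
    (hb0 : ∀ (x : EuclideanSpace ℝ (Fin n)) (t : ℝ), b x 0 t = 0)
    (γ : ℝ) (hγ : 0 < γ)
    -- the quadratic Lyapunov function V(x) = xᵀ P x with P = Pᵀ > 0
    (P : EuclideanSpace ℝ (Fin n) →L[ℝ] EuclideanSpace ℝ (Fin n))
    (plow phigh σ k : ℝ)
    (hplow : 0 < plow) (hphigh : 0 < phigh) (hσ : 0 < σ) (hk : 0 < k)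
    (hV_low : ∀ x : EuclideanSpace ℝ (Fin n), plow * ‖x‖ ^ 2 ≤ ⟪x, P x⟫)
    (hV_high : ∀ x : EuclideanSpace ℝ (Fin n), ⟪x, P x⟫ ≤ phigh * ‖x‖ ^ 2)
    (hPx : ∀ x : EuclideanSpace ℝ (Fin n), ‖P x‖ ≤ σ * ‖x‖)
    (hVdot : ∀ (x : EuclideanSpace ℝ (Fin n)) (t : ℝ),
      fderiv ℝ (fun y : EuclideanSpace ℝ (Fin n) => ⟪y, P y⟫) x (f x t) ≤ -(k * ⟪x, P x⟫))
    -- the small-gain condition on γ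
    (hsg : γ < k ^ 2 * plow / (16 * σ * B))
    -- a solution on [t₀, T)
    (t₀ T : ℝ) (x : ℝ → EuclideanSpace ℝ (Fin n)) (lam : ℝ → ℝ)
    (hsol : ∀ t ∈ Set.Ico t₀ T,
      HasDerivAt x (f (x t) t + b (x t) (lam t) t) t ∧
      HasDerivAt lam (-(γ * ‖x t‖)) t)
    -- with initial condition in Ω_a'
    (hinit : ‖x t₀‖ * k * Real.sqrt (plow * phigh) / (4 * σ * B) ≤ lam t₀) :
    (∃ M : ℝ, ∀ t ∈ Set.Ico t₀ T, ‖x t‖ ≤ M ∧ |lam t| ≤ M) ∧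
    ∀ t ∈ Set.Ico t₀ T, ‖x t‖ * k * plow / (4 * σ * B) ≤ lam t := by
  set V := fun y : EuclideanSpace ℝ (Fin n) => ⟪y, P y⟫
  have hb : ∀ y l t, ‖b y l t‖ ≤ B * |l| := fun y l t => by simpa [hb0] using hb_lip y l 0 t
  have hV : ∀ s ∈ Ico t₀ T, HasDerivAt (fun s => V (x s))
      (fderiv ℝ V (x s) (f (x s) s + b (x s) (lam s) s)) s := fun s hs =>
    (differentiableAt_fun_id.inner ℝ P.differentiableAt).hasFDerivAt.comp_hasDerivAt s (hsol s hs).1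
  have hV' : ∀ s ∈ Ico t₀ T, fderiv ℝ V (x s) (f (x s) s + b (x s) (lam s) s) ≤
      -(k * V (x s)) + 2 * (σ * B) * ‖x s‖ * |lam s| := fun s _ => by
    have := mul_le_mul_of_nonneg_left (hb (x s) (lam s) s) (by positivity : 0 ≤ 2 * σ * ‖x s‖)
    linarith [fderiv_inner_self_apply_add_le P hPx (x s) (f (x s) s) (b (x s) (lam s) s),
      hVdot (x s) s]
  have h₀ : (k / (4 * (σ * B))) ^ 2 * plow * V (x t₀) ≤ lam t₀ * |lam t₀| := by
    have hsqrt : (‖x t₀‖ * k * Real.sqrt (plow * phigh) / (4 * σ * B)) ^ 2 =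
        (k / (4 * (σ * B))) ^ 2 * plow * (phigh * ‖x t₀‖ ^ 2) := by
      rw [div_pow, mul_pow, Real.sq_sqrt (by positivity)]; ring
    calc (k / (4 * (σ * B))) ^ 2 * plow * V (x t₀)
        ≤ (k / (4 * (σ * B))) ^ 2 * plow * (phigh * ‖x t₀‖ ^ 2) := by gcongr; exact hV_high _
      _ ≤ lam t₀ * |lam t₀| := hsqrt ▸ (sq_le_mul_abs_iff (by positivity)).2 hinit
  have hlow := le_of_small_gain (V := fun s => V (x s)) (X := fun s => ‖x s‖) hk
    (by positivity) hplow.le (by rwa [← mul_assoc]) (fun s _ => norm_nonneg _)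
    (fun s _ => hV_low (x s)) hV hV' (fun s hs => (hsol s hs).2) h₀
  have hanti : ∀ t ∈ Ico t₀ T, lam t - lam t₀ ≤ 0 :=
    nonpos_of_hasDerivAt_le_mul_of_pos (K := 0) (fun s hs => (hsol s hs).2.sub_const _)
      (by simp) fun s _ _ => by simp only [zero_mul, neg_nonpos]; positivity
  have hβ : 0 < k * plow / (4 * (σ * B)) := by positivity
  refine ⟨⟨max (lam t₀ / (k * plow / (4 * (σ * B)))) (lam t₀), fun t ht => ⟨?_, ?_⟩⟩,
    fun t ht => ?_⟩
  · refine le_max_of_le_left ((le_div_iff₀ hβ).2 ?_)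
    linarith [hlow t ht, hanti t ht]
  · rw [abs_of_nonneg ((by positivity : (0 : ℝ) ≤ _).trans (hlow t ht))]
    exact le_max_of_le_right (by linarith [hanti t ht])
  · convert hlow t ht using 1
    ring

/-- **Corollary (non-uniform small-gain condition).**
For `ẋ = f(x,t) + b(x,λ,t)`, `λ̇ = −γ‖x‖`, with `b` Lipschitz in `λ` with constant `B`,
`b(x,0,t) = 0`, and a quadratic Lyapunov function `V(x) = ⟪x, Px⟫` with
`p̲‖x‖² ≤ V(x) ≤ p̄‖x‖²`, `‖Px‖ ≤ σ‖x‖` and `⟨∇V, f⟩ ≤ −kV`: if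
`γ < k²p̲/(16σB)`, then every solution with `λ(t₀) ≥ ‖x(t₀)‖·k·√(p̲p̄)/(4σB)` is bounded
in forward time and satisfies `λ(t) ≥ ‖x(t)‖·k·p̲/(4σB)` on its interval of existence. -/
theorem nonuniform_small_gain
    {n : ℕ}
    (f : EuclideanSpace ℝ (Fin n) → ℝ → EuclideanSpace ℝ (Fin n))
    (b : EuclideanSpace ℝ (Fin n) → ℝ → ℝ → EuclideanSpace ℝ (Fin n))
    (hf_cont : Continuous fun q : EuclideanSpace ℝ (Fin n) × ℝ => f q.1 q.2)
    (hb_cont : Continuous fun q : EuclideanSpace ℝ (Fin n) × ℝ × ℝ => b q.1 q.2.1 q.2.2)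
    (B : ℝ) (hB : 0 < B)
    (hb_lip : ∀ (x : EuclideanSpace ℝ (Fin n)) (lam lam' t : ℝ),
      ‖b x lam t - b x lam' t‖ ≤ B * |lam - lam'|)
    (hb0 : ∀ (x : EuclideanSpace ℝ (Fin n)) (t : ℝ), b x 0 t = 0)
    (γ : ℝ) (hγ : 0 < γ)
    -- the quadratic Lyapunov function V(x) = xᵀ P x with P = Pᵀ > 0
    (P : EuclideanSpace ℝ (Fin n) →L[ℝ] EuclideanSpace ℝ (Fin n))
    (hP_sym : ∀ x y : EuclideanSpace ℝ (Fin n), ⟪P x, y⟫ = ⟪x, P y⟫)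
    (plow phigh σ k : ℝ)
    (hplow : 0 < plow) (hphigh : 0 < phigh) (hσ : 0 < σ) (hk : 0 < k)
    (hV_low : ∀ x : EuclideanSpace ℝ (Fin n), plow * ‖x‖ ^ 2 ≤ ⟪x, P x⟫)
    (hV_high : ∀ x : EuclideanSpace ℝ (Fin n), ⟪x, P x⟫ ≤ phigh * ‖x‖ ^ 2)
    (hPx : ∀ x : EuclideanSpace ℝ (Fin n), ‖P x‖ ≤ σ * ‖x‖)
    (hVdot : ∀ (x : EuclideanSpace ℝ (Fin n)) (t : ℝ),
      fderiv ℝ (fun y : EuclideanSpace ℝ (Fin n) => ⟪y, P y⟫) x (f x t) ≤ -(k * ⟪x, P x⟫))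
    -- the small-gain condition on γ
    (hsg : γ < k ^ 2 * plow / (16 * σ * B))
    -- a solution on [t₀, T)
    (t₀ T : ℝ) (x : ℝ → EuclideanSpace ℝ (Fin n)) (lam : ℝ → ℝ)
    (hsol : ∀ t ∈ Set.Ico t₀ T,
      HasDerivAt x (f (x t) t + b (x t) (lam t) t) t ∧
      HasDerivAt lam (-(γ * ‖x t‖)) t)
    -- with initial condition in Ω_a'
    (hinit : ‖x t₀‖ * k * Real.sqrt (plow * phigh) / (4 * σ * B) ≤ lam t₀) :
    (∃ M : ℝ, ∀ t ∈ Set.Ico t₀ T, ‖x t‖ ≤ M ∧ |lam t| ≤ M) ∧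
    ∀ t ∈ Set.Ico t₀ T, ‖x t‖ * k * plow / (4 * σ * B) ≤ lam t :=
  nonuniform_small_gain_general f b B hB hb_lip hb0 γ hγ P plow phigh σ k hplow hphigh hσ hk hV_low
    hV_high hPx hVdot hsg t₀ T x lam hsol hinit
end

section
/- Consider the planar system ẋ₁ = −k x₁ + x₁² λ, λ̇ = −γ x₁² with constants k, γ > 0. For every p ≥ γ/(2k), setting a = ((1/p)(k − γ/(2p)))^{2/3}, the cone Ω_a(p) = {(x₁,λ) ∈ ℝ² : p·x₁² ≤ λ ≤ p·a and x₁² ≤ a} is forward invariant: every solution (x₁(·),λ(·)) with (x₁(t₀),λ(t₀)) ∈ Ω_a(p) satisfies (x₁(t),λ(t)) ∈ Ω_a(p) for all t ≥ t₀ in its interval of existence; consequently the union of the sets Ω_a(p) over all p ≥ γ/(2k) is forward invariant. -/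
open Set Filter Topology

noncomputable section

/-- The cone `Ω_a(p) = {(x₁,λ) : p x₁² ≤ λ ≤ p a, x₁² ≤ a}` with
`a = ((1/p)(k − γ/(2p)))^(2/3)`. -/
def OmegaCone (k γ p : ℝ) : Set (ℝ × ℝ) :=
  {q : ℝ × ℝ |
    p * q.1 ^ 2 ≤ q.2 ∧
    q.2 ≤ p * ((1 / p) * (k - γ / (2 * p))) ^ ((2 : ℝ) / 3) ∧
    q.1 ^ 2 ≤ ((1 / p) * (k - γ / (2 * p))) ^ ((2 : ℝ) / 3)}


/-!
The solution's `λ` is nonincreasing, so `λ ≤ p a` persists, and `x₁² ≤ a` then follows from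
`p x₁² ≤ λ`: only the defect `w = p x₁² - λ ≤ 0` has to be propagated. Writing `a = s²`, the
choice of `a` means `p s³ = k - γ/(2p)`, and `w' = 2p x₁² (x₁ λ - p s³)`. On the cone
`x₁ λ ≤ |x₁| p s² ≤ p s³`, so `w' ≤ 0` there; along a bounded piece of trajectory the excess
`x₁ λ - p s³` is at most a multiple of `w`, so `w' ≤ K w` wherever `w > 0`, which keeps
`w ≤ 0`.
-/

theorem nonpos_of_hasDerivWithinAt_le_mul_of_pos {w w' : ℝ → ℝ} {a b K : ℝ}
    (hw : ContinuousOn w (Icc a b)) (hw' : ∀ s ∈ Ico a b, HasDerivWithinAt w (w' s) (Ici s) s)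
    (bound : ∀ s ∈ Ico a b, 0 < w s → w' s ≤ K * w s) (ha : w a ≤ 0) :
    ∀ s ∈ Icc a b, w s ≤ 0 := by
  -- fence `w` by the barriers `ε e^{(|K|+1)(s-a)}`, which grow strictly faster than `w` can
  have fence : ∀ ε > 0, ∀ s ∈ Icc a b, w s ≤ ε * Real.exp ((|K| + 1) * (s - a)) := by
    intro ε hε
    refine image_le_of_deriv_right_lt_deriv_boundary hw hw' (by simpa using ha.trans hε.le)
      (fun s => ((((hasDerivAt_id' s).sub_const a).const_mul (|K| + 1)).exp).const_mul ε) ?_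
    intro s hs heq
    have hpos : 0 < w s := heq ▸ by positivity
    calc w' s ≤ K * w s := bound s hs hpos
      _ ≤ |K| * w s := mul_le_mul_of_nonneg_right (le_abs_self K) hpos.le
      _ < (|K| + 1) * w s := by linarith
      _ = _ := by rw [heq]; ring
  intro s hs
  by_contra! hpos
  have hE : 0 < Real.exp ((|K| + 1) * (s - a)) := Real.exp_pos _
  have := fence (w s / (2 * Real.exp ((|K| + 1) * (s - a)))) (by positivity) s hs
  rw [div_mul_eq_mul_div, mul_div_mul_right _ _ hE.ne'] at this
  linarith

theorem mul_sub_mul_pow_three_le {p s M x l : ℝ} (hp : 0 ≤ p) (hs : 0 ≤ s) (hx : |x| ≤ M)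
    (hl : l ≤ p * s ^ 2) (hw : 0 ≤ p * x ^ 2 - l) :
    x * l - p * s ^ 3 ≤ (M + s) * (p * x ^ 2 - l) := by
  rcases lt_or_ge l 0 with hl0 | hl0
  · calc x * l - p * s ^ 3 ≤ |x| * -l := by nlinarith [neg_abs_le x, pow_nonneg hs 3]
      _ ≤ M * (p * x ^ 2 - l) :=
        mul_le_mul hx (by nlinarith [mul_nonneg hp (sq_nonneg x)]) (by linarith)
          ((abs_nonneg x).trans hx)
      _ ≤ (M + s) * (p * x ^ 2 - l) := by nlinarith
  · have amgm : 2 * s * |x| ≤ x ^ 2 + s ^ 2 := by nlinarith [sq_nonneg (|x| - s), sq_abs x]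
    calc x * l - p * s ^ 3 ≤ |x| * (p * s ^ 2) - p * s ^ 3 := by
          nlinarith [le_abs_self x, abs_nonneg x]
      _ ≤ s / 2 * (p * x ^ 2 - p * s ^ 2) := by nlinarith [mul_nonneg hp hs]
      _ ≤ (M + s) * (p * x ^ 2 - l) := by nlinarith [abs_nonneg x]

def IsSolution (k γ : ℝ) (x lam : ℝ → ℝ) (t₀ T : ℝ) : Prop :=
  ∀ t ∈ Ico t₀ T,
    HasDerivAt x (-(k * x t) + x t ^ 2 * lam t) t ∧ HasDerivAt lam (-(γ * x t ^ 2)) t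

namespace IsSolution

variable {k γ p : ℝ} {x lam : ℝ → ℝ} {t₀ T : ℝ}

theorem antitoneOn (hsol : IsSolution k γ x lam t₀ T) (hγ : 0 ≤ γ) :
    AntitoneOn lam (Ico t₀ T) :=
  antitoneOn_of_hasDerivWithinAt_nonpos (convex_Ico t₀ T)
    (fun t ht => (hsol t ht).2.continuousAt.continuousWithinAt)
    (fun t ht => (hsol t (interior_subset ht)).2.hasDerivWithinAt)
    (fun t _ => neg_nonpos.2 (by positivity))

theorem hasDerivAt_mul_sq_sub (hsol : IsSolution k γ x lam t₀ T) (hp : p ≠ 0) {t : ℝ}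
    (ht : t ∈ Ico t₀ T) :
    HasDerivAt (fun u => p * x u ^ 2 - lam u)
      (2 * p * x t ^ 2 * (x t * lam t - (k - γ / (2 * p)))) t := by
  refine ((((hsol t ht).1.pow 2).const_mul p).sub (hsol t ht).2).congr_deriv ?_
  field_simp
  ring

theorem mul_sq_le_and_le {s : ℝ} (hsol : IsSolution k γ x lam t₀ T) (hγ : 0 ≤ γ) (hp : 0 < p)
    (hs : 0 ≤ s) (hc : p * s ^ 3 = k - γ / (2 * p)) (h₀ : p * x t₀ ^ 2 ≤ lam t₀)
    (h₀' : lam t₀ ≤ p * s ^ 2) :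
    ∀ t ∈ Ico t₀ T, p * x t ^ 2 ≤ lam t ∧ lam t ≤ p * s ^ 2 := by
  intro t ht
  have hIcc : Icc t₀ t ⊆ Ico t₀ T := Icc_subset_Ico_right ht.2
  have hlam : ∀ u ∈ Icc t₀ t, lam u ≤ p * s ^ 2 := fun u hu =>
    (hsol.antitoneOn hγ (left_mem_Ico.2 (ht.1.trans_lt ht.2)) (hIcc hu) hu.1).trans h₀'
  obtain ⟨M, hM⟩ : ∃ M, ∀ u ∈ Icc t₀ t, ‖x u‖ ≤ M :=
    isCompact_Icc.exists_bound_of_continuousOn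
      fun u hu => (hsol u (hIcc hu)).1.continuousAt.continuousWithinAt
  have hM₀ : 0 ≤ M := (norm_nonneg _).trans (hM t₀ ⟨le_rfl, ht.1⟩)
  have hderiv : ∀ u ∈ Icc t₀ t, HasDerivAt (fun u => p * x u ^ 2 - lam u)
      (2 * p * x u ^ 2 * (x u * lam u - (k - γ / (2 * p)))) u :=
    fun u hu => hsol.hasDerivAt_mul_sq_sub hp.ne' (hIcc hu)
  have hdefect : ∀ u ∈ Icc t₀ t, p * x u ^ 2 - lam u ≤ 0 := by
    refine nonpos_of_hasDerivWithinAt_le_mul_of_pos (K := 2 * p * M ^ 2 * (M + s))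
      (fun u hu => (hderiv u hu).continuousAt.continuousWithinAt)
      (fun u hu => (hderiv u (Ico_subset_Icc_self hu)).hasDerivWithinAt) ?_ (by linarith)
    intro u hu hpos
    have hxM : |x u| ≤ M := hM u (Ico_subset_Icc_self hu)
    have hx2 : x u ^ 2 ≤ M ^ 2 := by
      simpa only [sq_abs] using pow_le_pow_left₀ (abs_nonneg _) hxM 2
    rw [← hc]
    calc 2 * p * x u ^ 2 * (x u * lam u - p * s ^ 3)
        ≤ 2 * p * x u ^ 2 * ((M + s) * (p * x u ^ 2 - lam u)) :=
          mul_le_mul_of_nonneg_left (mul_sub_mul_pow_three_le hp.le hs hxM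
            (hlam u (Ico_subset_Icc_self hu)) hpos.le) (by positivity)
      _ ≤ 2 * p * M ^ 2 * ((M + s) * (p * x u ^ 2 - lam u)) := by gcongr
      _ = 2 * p * M ^ 2 * (M + s) * (p * x u ^ 2 - lam u) := by ring
  exact ⟨by linarith [hdefect t ⟨ht.1, le_rfl⟩], hlam t ⟨ht.1, le_rfl⟩⟩

theorem mem_omegaCone (hsol : IsSolution k γ x lam t₀ T) (hk : 0 < k) (hγ : 0 < γ)
    (hpk : γ / (2 * k) ≤ p) (h₀ : (x t₀, lam t₀) ∈ OmegaCone k γ p) :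
    ∀ t ∈ Ico t₀ T, (x t, lam t) ∈ OmegaCone k γ p := by
  have hp : 0 < p := (div_pos hγ (by positivity)).trans_le hpk
  have hb : 0 ≤ 1 / p * (k - γ / (2 * p)) := by
    rw [div_le_iff₀ (by positivity)] at hpk
    have : γ / (2 * p) ≤ k := by rw [div_le_iff₀ (by positivity)]; linarith
    exact mul_nonneg (by positivity) (by linarith)
  set s := (1 / p * (k - γ / (2 * p))) ^ ((1 : ℝ) / 3)
  have hs : 0 ≤ s := Real.rpow_nonneg hb _
  have ha : (1 / p * (k - γ / (2 * p))) ^ ((2 : ℝ) / 3) = s ^ 2 := by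
    rw [← Real.rpow_natCast, ← Real.rpow_mul hb]; norm_num
  have hc : p * s ^ 3 = k - γ / (2 * p) := by
    rw [← Real.rpow_natCast, ← Real.rpow_mul hb]; norm_num; field_simp
  simp only [OmegaCone, mem_ofPred_eq, ha] at h₀ ⊢
  intro t ht
  obtain ⟨h₁, h₂⟩ := hsol.mul_sq_le_and_le hγ.le hp hs hc h₀.1 h₀.2.1 t ht
  exact ⟨h₁, h₂, le_of_mul_le_mul_left (h₁.trans h₂) hp⟩

end IsSolution

/-- For the planar system `ẋ₁ = −k x₁ + x₁² λ`, `λ̇ = −γ x₁²` (`k, γ > 0`): for every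
`p ≥ γ/(2k)` the cone `Ω_a(p)` is forward invariant, and consequently the union of the
cones `Ω_a(p)` over all `p ≥ γ/(2k)` is forward invariant. -/
theorem cone_forward_invariance
    (k γ : ℝ) (hk : 0 < k) (hγ : 0 < γ) :
    (∀ p : ℝ, γ / (2 * k) ≤ p →
      ∀ (t₀ T : ℝ) (x₁ lam : ℝ → ℝ),
        (∀ t ∈ Set.Ico t₀ T,
          HasDerivAt x₁ (-(k * x₁ t) + (x₁ t) ^ 2 * lam t) t ∧
          HasDerivAt lam (-(γ * (x₁ t) ^ 2)) t) →
        (x₁ t₀, lam t₀) ∈ OmegaCone k γ p →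
        ∀ t ∈ Set.Ico t₀ T, (x₁ t, lam t) ∈ OmegaCone k γ p) ∧
    (∀ (t₀ T : ℝ) (x₁ lam : ℝ → ℝ),
      (∀ t ∈ Set.Ico t₀ T,
        HasDerivAt x₁ (-(k * x₁ t) + (x₁ t) ^ 2 * lam t) t ∧
        HasDerivAt lam (-(γ * (x₁ t) ^ 2)) t) →
      (x₁ t₀, lam t₀) ∈ ⋃ p ∈ Set.Ici (γ / (2 * k)), OmegaCone k γ p →
      ∀ t ∈ Set.Ico t₀ T,
        (x₁ t, lam t) ∈ ⋃ p ∈ Set.Ici (γ / (2 * k)), OmegaCone k γ p) := by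
  refine ⟨fun p hp t₀ T x₁ lam hsol h₀ => IsSolution.mem_omegaCone hsol hk hγ hp h₀, ?_⟩
  intro t₀ T x₁ lam hsol h₀ t ht
  simp only [mem_iUnion, mem_Ici] at h₀ ⊢
  obtain ⟨p, hp, h₀⟩ := h₀
  exact ⟨p, hp, IsSolution.mem_omegaCone hsol hk hγ hp h₀ t ht⟩
end
end

section
/- Consider the cascade system ẋ₁ = −τ₁ x₁ + c₁ x₂, ẋ₂ = −c₂|x₁| with constants τ₁, c₁, c₂ > 0. If 0 < c₂ < τ₁²/(4c₁), then every solution (x₁(·),x₂(·)) with x₂(t₀) ≥ (τ₁/(2c₁))·|x₁(t₀)| is bounded in forward time and satisfies x₂(t) ≥ (τ₁/(2c₁))·|x₁(t)| for all t ≥ t₀; in particular the system possesses nontrivial bounded forward solutions. -/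
/-!
With `k = τ₁ / (2 c₁)` the cone `x₂ ≥ k |x₁|` is bounded by the two faces `x₂ = ± k x₁`, and
`c₁ k² - τ₁ k + c₂ = c₂ - τ₁² / (4 c₁) ≤ 0` says exactly that the vector field does not point
out of the cone across either face. Pushing both faces outward by `ε e^{ρ (t - t₀)}` makes this
strict, so by real induction the solution stays inside the perturbed cone; letting `ε → 0` gives
the invariance. Inside the cone `x₂ ≥ 0` is nonincreasing, hence `k |x₁ t| ≤ x₂ t ≤ x₂ t₀`.
A nontrivial bounded solution is the decaying eigenmode `(e^{μt}, a e^{μt})` with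
`μ = (√(τ₁² - 4 c₁ c₂) - τ₁) / 2`.
-/

open Set Filter Topology

theorem HasDerivWithinAt.eventually_gt_nhdsGT {f : ℝ → ℝ} {f' x : ℝ}
    (hf : HasDerivWithinAt f f' (Ici x) x) (hf' : 0 < f') : ∀ᶠ z in 𝓝[>] x, f x < f z := by
  have hslope : Tendsto (slope f x) (𝓝[>] x) (𝓝 f') :=
    (hasDerivWithinAt_iff_tendsto_slope' (lt_irrefl x)).1 (hf.mono Ioi_subset_Ici_self)
  filter_upwards [hslope.eventually (lt_mem_nhds hf'), self_mem_nhdsWithin] with z hz hxz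
  exact (slope_pos_iff hxz).1 hz

theorem Icc_subset_nonneg_of_hasDerivWithinAt_pos {ι : Type*} [Finite ι] {g g' : ι → ℝ → ℝ}
    {a b : ℝ} (hg : ∀ i, ContinuousOn (g i) (Icc a b))
    (hg' : ∀ i, ∀ t ∈ Ico a b, HasDerivWithinAt (g i) (g' i t) (Ici t) t)
    (ha : ∀ i, 0 ≤ g i a)
    (hboundary : ∀ t ∈ Ico a b, (∀ j, 0 ≤ g j t) → ∀ i, g i t = 0 → 0 < g' i t) :
    Icc a b ⊆ {t | ∀ i, 0 ≤ g i t} := by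
  have hclosed : IsClosed ({t | ∀ i, 0 ≤ g i t} ∩ Icc a b) := by
    rw [inter_comm]
    convert (continuousOn_pi.2 hg).preimage_isClosed_of_isClosed isClosed_Icc
      (isClosed_set_pi (i := univ) fun _ _ ↦ isClosed_Ici (a := (0 : ℝ))) using 2
    ext; simp [Pi.le_def]
  refine hclosed.Icc_subset_of_forall_mem_nhdsWithin ha fun t ⟨hnonneg, ht⟩ ↦ ?_
  refine eventually_all.2 fun i ↦ (hnonneg i).eq_or_lt.elim (fun hzero ↦ ?_) fun hpos ↦ ?_
  · filter_upwards [(hg' i t ht).eventually_gt_nhdsGT (hboundary t ht hnonneg i hzero.symm)]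
      with z hz using hzero ▸ hz.le
  · exact ((hg' i t ht).continuousWithinAt.mono Ioi_subset_Ici_self).eventually
      (lt_mem_nhds hpos) |>.mono fun z hz ↦ hz.le

open Real

def IsCascadeSolution (τ₁ c₁ c₂ : ℝ) (x₁ x₂ : ℝ → ℝ) (s : Set ℝ) : Prop :=
  ∀ t ∈ s, HasDerivAt x₁ (-(τ₁ * x₁ t) + c₁ * x₂ t) t ∧ HasDerivAt x₂ (-(c₂ * |x₁ t|)) t

section

variable {τ₁ c₁ c₂ k t₀ T : ℝ} {x₁ x₂ : ℝ → ℝ}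

theorem cascade_face_deriv_pos {ρ σ x y e : ℝ} (hc₁ : 0 ≤ c₁) (hk : 0 < k)
    (hcone : c₁ * k ^ 2 + c₂ ≤ τ₁ * k) (hρ : c₁ * k < ρ) (hσ : σ = 1 ∨ σ = -1) (he : 0 < e)
    (hface : y - σ * (k * x) + e = 0) (hother : 0 ≤ y + σ * (k * x) + e) :
    0 < -(c₂ * |x|) - σ * (k * (-(τ₁ * x) + c₁ * y)) + ρ * e := by
  have hc₁k : 0 ≤ c₁ * k := mul_nonneg hc₁ hk.le
  rcases hσ with rfl | rfl
  · have hx : 0 ≤ x := (mul_nonneg_iff_of_pos_left hk).1 (by linarith)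
    have hy : y = k * x - e := by linarith
    rw [abs_of_nonneg hx, hy]
    calc 0 < x * (τ₁ * k - c₁ * k ^ 2 - c₂) + e * (ρ + c₁ * k) :=
          add_pos_of_nonneg_of_pos (mul_nonneg hx (by linarith)) (mul_pos he (by linarith))
      _ = _ := by ring
  · have hx : x ≤ 0 := nonpos_of_mul_nonpos_right (by linarith) hk
    have hy : y = -(k * x) - e := by linarith
    rw [abs_of_nonpos hx, hy]
    calc 0 < -x * (τ₁ * k + c₁ * k ^ 2 - c₂) + e * (ρ - c₁ * k) :=
          add_pos_of_nonneg_of_pos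
            (mul_nonneg (neg_nonneg.2 hx) (by linarith [mul_nonneg hc₁k hk.le]))
            (mul_pos he (by linarith))
      _ = _ := by ring

theorem IsCascadeSolution.mul_abs_le_add_exp (hc₁ : 0 ≤ c₁) (hk : 0 < k)
    (hcone : c₁ * k ^ 2 + c₂ ≤ τ₁ * k) {ρ ε : ℝ} (hρ : c₁ * k < ρ) (hε : 0 < ε)
    (hx : IsCascadeSolution τ₁ c₁ c₂ x₁ x₂ (Ico t₀ T)) (h₀ : k * |x₁ t₀| ≤ x₂ t₀) :
    ∀ t ∈ Ico t₀ T, k * |x₁ t| ≤ x₂ t + ε * exp (ρ * (t - t₀)) := by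
  intro t ht
  set E : ℝ → ℝ := fun s ↦ exp (ρ * (s - t₀))
  -- `g σ` measures the distance above the face `x₂ = σ k x₁`, pushed outward by `ε E`.
  set g : ({1, -1} : Set ℝ) → ℝ → ℝ := fun σ s ↦ x₂ s - σ * (k * x₁ s) + ε * E s
  set g' : ({1, -1} : Set ℝ) → ℝ → ℝ := fun σ s ↦
    -(c₂ * |x₁ s|) - σ * (k * (-(τ₁ * x₁ s) + c₁ * x₂ s)) + ρ * (ε * E s)
  have hg : ∀ σ, ∀ s ∈ Icc t₀ t, HasDerivAt (g σ) (g' σ s) s := by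
    intro σ s hs
    have hs' : s ∈ Ico t₀ T := ⟨hs.1, hs.2.trans_lt ht.2⟩
    have hE : HasDerivAt E (ρ * E s) s := by
      simpa [E, mul_comm] using (((hasDerivAt_id s).sub_const t₀).const_mul ρ).exp
    exact (((hx s hs').2.sub (((hx s hs').1.const_mul k).const_mul (σ : ℝ))).add
      (hE.const_mul ε)).congr_deriv (by ring)
  have hinit : ∀ σ, 0 ≤ g σ t₀ := by
    have := abs_le.1 (show |k * x₁ t₀| ≤ x₂ t₀ by rwa [abs_mul, abs_of_pos hk])
    rintro ⟨σ, rfl | rfl⟩ <;>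
      simp only [g, E, sub_self, mul_zero, exp_zero, mul_one, one_mul, neg_mul, sub_neg_eq_add] <;>
      linarith
  have hboundary : ∀ s ∈ Ico t₀ t, (∀ σ, 0 ≤ g σ s) → ∀ σ, g σ s = 0 → 0 < g' σ s := by
    rintro s - hall ⟨σ, hσ⟩ hface
    have hnegσ : -σ ∈ ({1, -1} : Set ℝ) := by rcases hσ with rfl | rfl <;> simp
    have hother := hall ⟨-σ, hnegσ⟩
    simp only [g, neg_mul, sub_neg_eq_add] at hother hface
    exact cascade_face_deriv_pos hc₁ hk hcone hρ hσ (mul_pos hε (exp_pos _)) hface hother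
  have hnonneg : ∀ σ, 0 ≤ g σ t := Icc_subset_nonneg_of_hasDerivWithinAt_pos
    (fun σ s hs ↦ (hg σ s hs).continuousAt.continuousWithinAt)
    (fun σ s hs ↦ (hg σ s (Ico_subset_Icc_self hs)).hasDerivWithinAt) hinit hboundary
    (right_mem_Icc.2 ht.1)
  have hplus := hnonneg ⟨1, by simp⟩
  have hminus := hnonneg ⟨-1, by simp⟩
  simp only [g] at hplus hminus
  rw [← abs_of_pos hk, ← abs_mul]
  exact abs_le.2 ⟨by linarith, by linarith⟩

theorem IsCascadeSolution.mul_abs_le (hc₁ : 0 ≤ c₁) (hk : 0 < k)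
    (hcone : c₁ * k ^ 2 + c₂ ≤ τ₁ * k) (hx : IsCascadeSolution τ₁ c₁ c₂ x₁ x₂ (Ico t₀ T))
    (h₀ : k * |x₁ t₀| ≤ x₂ t₀) : ∀ t ∈ Ico t₀ T, k * |x₁ t| ≤ x₂ t := by
  intro t ht
  refine le_of_forall_pos_le_add fun δ hδ ↦ ?_
  have hE := exp_pos ((c₁ * k + 1) * (t - t₀))
  simpa [div_mul_cancel₀ _ hE.ne'] using
    hx.mul_abs_le_add_exp hc₁ hk hcone (lt_add_one _) (div_pos hδ hE) h₀ t ht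

theorem IsCascadeSolution.antitoneOn_snd {s : Set ℝ} (hc₂ : 0 ≤ c₂) (hs : Convex ℝ s)
    (hx : IsCascadeSolution τ₁ c₁ c₂ x₁ x₂ s) : AntitoneOn x₂ s :=
  antitoneOn_of_hasDerivWithinAt_nonpos hs
    (fun t ht ↦ (hx t ht).2.continuousAt.continuousWithinAt)
    (fun t ht ↦ (hx t (interior_subset ht)).2.hasDerivWithinAt)
    fun _ _ ↦ neg_nonpos.2 (mul_nonneg hc₂ (abs_nonneg _))

theorem IsCascadeSolution.bounded_of_mul_abs_le (hk : 0 < k) (hc₂ : 0 ≤ c₂)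
    (hx : IsCascadeSolution τ₁ c₁ c₂ x₁ x₂ (Ico t₀ T))
    (hcone : ∀ t ∈ Ico t₀ T, k * |x₁ t| ≤ x₂ t) :
    ∃ M, ∀ t ∈ Ico t₀ T, |x₁ t| ≤ M ∧ |x₂ t| ≤ M := by
  refine ⟨max (x₂ t₀ / k) (x₂ t₀), fun t ht ↦ ?_⟩
  have hdecr : x₂ t ≤ x₂ t₀ :=
    hx.antitoneOn_snd hc₂ (convex_Ico t₀ T) ⟨le_rfl, ht.1.trans_lt ht.2⟩ ht ht.1
  have hx₂ : 0 ≤ x₂ t := (mul_nonneg hk.le (abs_nonneg _)).trans (hcone t ht)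
  refine ⟨le_max_of_le_left ?_, le_max_of_le_right ?_⟩
  · rw [le_div_iff₀ hk, mul_comm]
    exact (hcone t ht).trans hdecr
  · rwa [abs_of_nonneg hx₂]

theorem isCascadeSolution_exp {μ a : ℝ} (h₁ : μ = -τ₁ + c₁ * a) (h₂ : a * μ = -c₂) :
    IsCascadeSolution τ₁ c₁ c₂ (fun t ↦ exp (μ * t)) (fun t ↦ a * exp (μ * t)) univ := by
  intro t _
  have hexp : HasDerivAt (fun t ↦ exp (μ * t)) (μ * exp (μ * t)) t := by
    simpa [mul_comm] using ((hasDerivAt_id t).const_mul μ).exp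
  refine ⟨hexp.congr_deriv (by rw [h₁]; ring), (hexp.const_mul a).congr_deriv ?_⟩
  rw [abs_of_pos (exp_pos _), ← mul_assoc, h₂]; ring

theorem exists_nonpos_cascade_mode (hτ₁ : 0 ≤ τ₁) (hc₁ : 0 < c₁) (hc₂ : 0 ≤ c₂)
    (hdisc : 4 * c₁ * c₂ ≤ τ₁ ^ 2) : ∃ μ a : ℝ, μ ≤ 0 ∧ μ = -τ₁ + c₁ * a ∧ a * μ = -c₂ := by
  set s := √(τ₁ ^ 2 - 4 * c₁ * c₂)
  have hs : s ^ 2 = τ₁ ^ 2 - 4 * c₁ * c₂ := sq_sqrt (by linarith)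
  have hsτ : s ≤ τ₁ := sqrt_le_iff.2 ⟨hτ₁, by nlinarith [mul_nonneg hc₁.le hc₂]⟩
  refine ⟨(s - τ₁) / 2, (τ₁ + s) / (2 * c₁), by linarith, by field_simp; ring, ?_⟩
  field_simp
  linear_combination hs

theorem exists_nontrivial_bounded_isCascadeSolution (hτ₁ : 0 ≤ τ₁) (hc₁ : 0 < c₁)
    (hc₂ : 0 ≤ c₂) (hdisc : 4 * c₁ * c₂ ≤ τ₁ ^ 2) :
    ∃ x₁ x₂ : ℝ → ℝ, IsCascadeSolution τ₁ c₁ c₂ x₁ x₂ (Ici 0) ∧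
      (∃ t ∈ Ici (0 : ℝ), (x₁ t, x₂ t) ≠ (0, 0)) ∧
      ∃ M, ∀ t ∈ Ici (0 : ℝ), |x₁ t| ≤ M ∧ |x₂ t| ≤ M := by
  obtain ⟨μ, a, hμ, h₁, h₂⟩ := exists_nonpos_cascade_mode hτ₁ hc₁ hc₂ hdisc
  refine ⟨_, _, fun t _ ↦ isCascadeSolution_exp h₁ h₂ t trivial, ⟨0, self_mem_Ici, by simp⟩,
    max 1 |a|, fun t ht ↦ ?_⟩
  have hexp : |exp (μ * t)| ≤ 1 := by
    rw [abs_of_pos (exp_pos _), exp_le_one_iff]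
    exact mul_nonpos_of_nonpos_of_nonneg hμ ht
  refine ⟨hexp.trans (le_max_left _ _), ?_⟩
  rw [abs_mul]
  exact (mul_le_of_le_one_right (abs_nonneg a) hexp).trans (le_max_right _ _)

end

/-- For the cascade `ẋ₁ = −τ₁x₁ + c₁x₂`, `ẋ₂ = −c₂|x₁|` with `τ₁, c₁, c₂ > 0` and
`c₂ < τ₁²/(4c₁)`: every solution with `x₂(t₀) ≥ (τ₁/(2c₁))|x₁(t₀)|` is bounded in
forward time and satisfies `x₂(t) ≥ (τ₁/(2c₁))|x₁(t)|` for all `t ≥ t₀`; in particular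
the system possesses nontrivial bounded forward solutions. -/
theorem cascade_bounded_solutions
    (τ₁ c₁ c₂ : ℝ) (hτ₁ : 0 < τ₁) (hc₁ : 0 < c₁) (hc₂ : 0 < c₂)
    (hsg : c₂ < τ₁ ^ 2 / (4 * c₁)) :
    -- boundedness and forward invariance along every solution starting in the cone
    (∀ (t₀ T : ℝ) (x₁ x₂ : ℝ → ℝ),
      (∀ t ∈ Set.Ico t₀ T,
        HasDerivAt x₁ (-(τ₁ * x₁ t) + c₁ * x₂ t) t ∧
        HasDerivAt x₂ (-(c₂ * |x₁ t|)) t) →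
      (τ₁ / (2 * c₁)) * |x₁ t₀| ≤ x₂ t₀ →
      (∃ M : ℝ, ∀ t ∈ Set.Ico t₀ T, |x₁ t| ≤ M ∧ |x₂ t| ≤ M) ∧
      ∀ t ∈ Set.Ico t₀ T, (τ₁ / (2 * c₁)) * |x₁ t| ≤ x₂ t) ∧
    -- in particular, there exists a nontrivial bounded forward solution
    (∃ x₁ x₂ : ℝ → ℝ,
      (∀ t ∈ Set.Ici (0:ℝ),
        HasDerivAt x₁ (-(τ₁ * x₁ t) + c₁ * x₂ t) t ∧
        HasDerivAt x₂ (-(c₂ * |x₁ t|)) t) ∧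
      (∃ t ∈ Set.Ici (0:ℝ), (x₁ t, x₂ t) ≠ (0, 0)) ∧
      (∃ M : ℝ, ∀ t ∈ Set.Ici (0:ℝ), |x₁ t| ≤ M ∧ |x₂ t| ≤ M)) := by
  have hdisc : 4 * c₁ * c₂ < τ₁ ^ 2 := by rwa [lt_div_iff₀ (by positivity), mul_comm] at hsg
  have hk : 0 < τ₁ / (2 * c₁) := by positivity
  have hcone : c₁ * (τ₁ / (2 * c₁)) ^ 2 + c₂ ≤ τ₁ * (τ₁ / (2 * c₁)) := by
    field_simp
    nlinarith
  refine ⟨fun t₀ T x₁ x₂ hx h₀ ↦ ?_,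
    exists_nontrivial_bounded_isCascadeSolution hτ₁.le hc₁ hc₂.le hdisc.le⟩
  have hinv := IsCascadeSolution.mul_abs_le hc₁.le hk hcone hx h₀
  exact ⟨IsCascadeSolution.bounded_of_mul_abs_le hk hc₂.le hx hinv, hinv⟩
end
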